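/- arXiv:2411.04566 — 6 statements merged into one kernel-verified Lean document; each statement's English description precedes it below -/
import Mathlib

section
/- Let $\{x_j\}_{j=0}^{d} \subset [0,1]$ be a $\delta$-separated set of $d+1$ points (i.e., $|x_i - x_j| \geq \delta$ for $i \neq j$). Then for any polynomial $p$ of degree at most $d$ and any real $L \geq 1$, we have $|p(L)| \leq (e^2 (\delta d)^{-1} L)^d \max_{0 \leq j \leq d} |p(x_j)|$. -/
/-!
Sort the nodes. Lagrange interpolation gives `|p(L)| ≤ maxⱼ |p(xⱼ)| · Σₘ |ℓₘ(L)|`. Sorted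
`δ`-separated nodes satisfy `|xₘ - xₖ| ≥ δ |m - k|`, and `|L - xₖ| ≤ L`, so
`|ℓₘ(L)| ≤ (L/δ)^d / (m! (d-m)!)`; summing over `m` gives `(L/δ)^d 2^d / d!`, and
`2^d / d! ≤ (e²/d)^d` because `d^d / d! ≤ e^d`.
-/

open Real Polynomial

open Finset
open scoped Nat

namespace Lagrange

variable {F ι : Type*} [Field F] [LinearOrder F] [IsStrictOrderedRing F] [DecidableEq ι]
  {s : Finset ι} {v : ι → F}

theorem abs_eval_basis (i : ι) (z : F) :
    |(Lagrange.basis s v i).eval z| = ∏ j ∈ s.erase i, |z - v j| / |v i - v j| := by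
  rw [Lagrange.basis, eval_prod, abs_prod]
  refine prod_congr rfl fun j _ => ?_
  rw [basisDivisor, eval_mul, eval_C, eval_sub, eval_X, eval_C, abs_mul, abs_inv, inv_mul_eq_div]

theorem abs_eval_le_sum_abs_mul_abs_eval_basis {p : F[X]} (hvs : Set.InjOn v s)
    (hp : p.degree < #s) (z : F) :
    |p.eval z| ≤ ∑ i ∈ s, |p.eval (v i)| * |(Lagrange.basis s v i).eval z| := by
  conv_lhs => rw [eq_interpolate hvs hp, interpolate_apply, eval_finsetSum]
  simp only [eval_mul, eval_C, ← abs_mul]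
  exact abs_sum_le_sum_abs _ _

end Lagrange

section Separated

variable {R : Type*} [Field R] [LinearOrder R] [IsStrictOrderedRing R] {n : ℕ} {δ : R} {y : Fin n → R}

theorem Monotone.mul_sub_le_sub_of_separated (hy : Monotone y)
    (hsep : ∀ i j, i ≠ j → δ ≤ |y i - y j|) {i j : Fin n} (hij : i ≤ j) :
    δ * (((j : ℕ) : R) - (i : ℕ)) ≤ y j - y i := by
  obtain ⟨k, hk⟩ := Nat.exists_eq_add_of_le (Fin.le_def.mp hij)
  induction k generalizing j with
  | zero => simp [Fin.ext hk]
  | succ k ih =>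
    let c : Fin n := ⟨i + k, by omega⟩
    have hc : δ * (((c : ℕ) : R) - (i : ℕ)) ≤ y c - y i := ih (Fin.le_def.mpr (by simp [c])) rfl
    have hcj : c < j := Fin.lt_def.mpr (by simp [c]; omega)
    have hstep : δ ≤ y j - y c := by
      simpa [abs_of_nonneg (sub_nonneg.mpr (hy hcj.le))] using hsep j c hcj.ne'
    simp only [c, hk] at hc hstep ⊢
    push_cast at hc ⊢
    linarith

theorem Monotone.mul_abs_sub_le_abs_sub_of_separated (hy : Monotone y)
    (hsep : ∀ i j, i ≠ j → δ ≤ |y i - y j|) (i j : Fin n) :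
    δ * |((i : ℕ) : R) - (j : ℕ)| ≤ |y i - y j| := by
  wlog hij : i ≤ j generalizing i j
  · rw [abs_sub_comm, abs_sub_comm (y i)]
    exact this j i (le_of_not_ge hij)
  rw [abs_sub_comm, abs_sub_comm (y i), abs_of_nonneg (sub_nonneg.mpr (hy hij)),
    abs_of_nonneg (sub_nonneg.mpr (Nat.cast_le.mpr (Fin.le_def.mp hij)))]
  exact hy.mul_sub_le_sub_of_separated hsep hij

end Separated

theorem prod_range_abs_sub (m : ℕ) : ∏ k ∈ range m, |(m : ℝ) - k| = m ! := by
  induction m with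
  | zero => simp
  | succ m ih =>
    rw [prod_range_succ', Nat.factorial_succ]
    push_cast
    simp only [add_sub_add_right_eq_sub, ih, sub_zero]
    rw [abs_of_nonneg (by positivity)]
    ring

theorem prod_erase_range_abs_sub {d m : ℕ} (hm : m ≤ d) :
    ∏ k ∈ (range (d + 1)).erase m, |(m : ℝ) - k| = m ! * (d - m)! := by
  induction d, hm using Nat.le_induction with
  | base => simp [range_add_one, prod_range_abs_sub]
  | succ d hmd ih =>
    rw [range_add_one, erase_insert_of_ne (by omega), prod_insert (by simp), ih,
      Nat.succ_sub hmd, Nat.factorial_succ]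
    have hmd' : (m : ℝ) ≤ d := by exact_mod_cast hmd
    push_cast [Nat.cast_sub hmd]
    rw [abs_of_nonpos (by linarith)]
    ring

theorem Fin.prod_erase_abs_sub {d : ℕ} (m : Fin (d + 1)) :
    ∏ k ∈ univ.erase m, |((m : ℕ) : ℝ) - (k : ℕ)| = (m : ℕ)! * (d - m)! := by
  have hval : (univ.erase m).map Fin.valEmbedding = (range (d + 1)).erase m := by
    rw [map_erase, Fin.map_valEmbedding_univ, Nat.Iio_eq_range]
    rfl
  rw [← prod_erase_range_abs_sub (Nat.lt_succ_iff.mp m.isLt), ← hval, prod_map]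
  rfl

theorem sum_inv_factorial_mul_factorial (d : ℕ) :
    ∑ m : Fin (d + 1), (((m : ℕ)! * (d - m)! : ℝ))⁻¹ = 2 ^ d / d ! := by
  rw [Fin.sum_univ_eq_sum_range (fun m => ((m ! * (d - m)! : ℝ))⁻¹)]
  have hterm : ∀ m ∈ range (d + 1), ((m ! * (d - m)! : ℝ))⁻¹ = d.choose m / d ! := by
    intro m hm
    rw [Nat.cast_choose ℝ (Nat.lt_succ_iff.mp (mem_range.mp hm)), div_div_cancel_left' (by positivity)]
  rw [sum_congr rfl hterm, ← sum_div, ← Nat.cast_sum, Nat.sum_range_choose]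
  push_cast
  rfl

theorem two_pow_div_factorial_le (d : ℕ) : (2 : ℝ) ^ d / d ! ≤ (exp 2 / d) ^ d := by
  have hd : (0 : ℝ) < (d : ℝ) ^ d := by exact_mod_cast Nat.pow_self_pos
  rw [div_pow, le_div_iff₀ hd, div_mul_eq_mul_div, mul_div_assoc]
  calc (2 : ℝ) ^ d * ((d : ℝ) ^ d / d !) ≤ exp 1 ^ d * exp d := by
        gcongr
        · linarith [add_one_le_exp (1 : ℝ)]
        · exact pow_div_factorial_le_exp _ d.cast_nonneg d
    _ = exp 2 ^ d := by rw [exp_one_pow, ← exp_add, ← exp_nat_mul]; ring_nf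

section Monotone

variable {d : ℕ} {δ z R : ℝ} {y : Fin (d + 1) → ℝ}

theorem abs_eval_basis_le_of_monotone (hδ : 0 < δ) (hy : Monotone y)
    (hsep : ∀ i j, i ≠ j → δ ≤ |y i - y j|) (hz : ∀ k, |z - y k| ≤ R) (m : Fin (d + 1)) :
    |(Lagrange.basis univ y m).eval z| ≤ (R / δ) ^ d / ((m : ℕ)! * (d - m)!) := by
  have hR : 0 ≤ R := (abs_nonneg _).trans (hz m)
  have hgap : ∀ k ∈ univ.erase m, 0 < δ * |((m : ℕ) : ℝ) - (k : ℕ)| := fun k hk => by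
    have : (m : ℕ) ≠ k := Fin.val_ne_of_ne (ne_of_mem_erase hk).symm
    have : ((m : ℕ) : ℝ) ≠ (k : ℕ) := by exact_mod_cast this
    positivity
  rw [Lagrange.abs_eval_basis]
  calc ∏ k ∈ univ.erase m, |z - y k| / |y m - y k|
      ≤ ∏ k ∈ univ.erase m, R / (δ * |((m : ℕ) : ℝ) - (k : ℕ)|) :=
        prod_le_prod (fun _ _ => by positivity) fun k hk =>
          div_le_div₀ hR (hz k) (hgap k hk) (hy.mul_abs_sub_le_abs_sub_of_separated hsep m k)
    _ = (R / δ) ^ d / ((m : ℕ)! * (d - m)!) := by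
        rw [prod_div_distrib, prod_mul_distrib, prod_const, prod_const, Fin.prod_erase_abs_sub,
          card_erase_of_mem (mem_univ m), card_univ, Fintype.card_fin, Nat.add_sub_cancel,
          div_pow, div_div]

theorem abs_eval_le_of_monotone (hδ : 0 < δ) (hy : Monotone y)
    (hsep : ∀ i j, i ≠ j → δ ≤ |y i - y j|) (hz : ∀ k, |z - y k| ≤ R) {p : ℝ[X]}
    (hp : p.natDegree ≤ d) :
    |p.eval z| ≤ (R / δ) ^ d * (2 ^ d / d !) * ⨆ j, |p.eval (y j)| := by
  have hinj : Set.InjOn y (univ : Finset (Fin (d + 1))) := fun i _ j _ hij => by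
    by_contra hne
    linarith [hsep i j hne, show |y i - y j| = 0 by simp [hij]]
  have hdeg : p.degree < #(univ : Finset (Fin (d + 1))) := by
    rw [card_univ, Fintype.card_fin]
    exact (degree_le_of_natDegree_le hp).trans_lt (by exact_mod_cast d.lt_succ_self)
  have hM : ∀ j, |p.eval (y j)| ≤ ⨆ j, |p.eval (y j)| :=
    le_ciSup (Set.finite_range _).bddAbove
  calc |p.eval z| ≤ ∑ m, |p.eval (y m)| * |(Lagrange.basis univ y m).eval z| :=
        Lagrange.abs_eval_le_sum_abs_mul_abs_eval_basis hinj hdeg z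
    _ ≤ ∑ m : Fin (d + 1), (⨆ j, |p.eval (y j)|) * ((R / δ) ^ d / ((m : ℕ)! * (d - m)!)) :=
        sum_le_sum fun m _ => mul_le_mul (hM m) (abs_eval_basis_le_of_monotone hδ hy hsep hz m)
          (abs_nonneg _) ((abs_nonneg _).trans (hM m))
    _ = (R / δ) ^ d * (2 ^ d / d !) * ⨆ j, |p.eval (y j)| := by
        simp only [div_eq_mul_inv ((R / δ) ^ d), ← mul_sum, ← sum_inv_factorial_mul_factorial]
        ring

end Monotone

theorem discrete_remez_extrapolation_general
    (d : ℕ) (δ : ℝ) (hδ : 0 < δ)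
    (x : Fin (d + 1) → ℝ) (hx : ∀ j, x j ∈ Set.Icc (0 : ℝ) 1)
    (hsep : ∀ i j, i ≠ j → δ ≤ |x i - x j|)
    (p : Polynomial ℝ) (hp : p.natDegree ≤ d)
    (L : ℝ) (hL : 1 ≤ L) :
    |p.eval L| ≤ (Real.exp 2 * (δ * d)⁻¹ * L) ^ d * ⨆ j, |p.eval (x j)| := by
  set σ := Tuple.sort x
  have hsep_sorted : ∀ i j, i ≠ j → δ ≤ |x (σ i) - x (σ j)| := fun i j hij =>
    hsep _ _ (σ.injective.ne hij)
  have hdist : ∀ k, |L - x (σ k)| ≤ L := fun k => by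
    obtain ⟨h0, h1⟩ := hx (σ k)
    rw [abs_le]
    constructor <;> linarith
  have hM : 0 ≤ ⨆ j, |p.eval (x j)| := Real.iSup_nonneg fun _ => abs_nonneg _
  calc |p.eval L| ≤ (L / δ) ^ d * (2 ^ d / d !) * ⨆ j, |p.eval (x j)| := by
        rw [← σ.iSup_comp (g := fun j => |p.eval (x j)|)]
        exact abs_eval_le_of_monotone hδ (Tuple.monotone_sort x) hsep_sorted hdist hp
    _ ≤ (L / δ) ^ d * (exp 2 / d) ^ d * ⨆ j, |p.eval (x j)| := by
        gcongr
        exact two_pow_div_factorial_le d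
    _ = (Real.exp 2 * (δ * d)⁻¹ * L) ^ d * ⨆ j, |p.eval (x j)| := by
        rw [← mul_pow]
        ring

/-- Discrete Remez inequality: extrapolation bound for a polynomial of degree at most `d`
from a `δ`-separated set of `d+1` points in `[0,1]` to a point `L ≥ 1`. -/
theorem discrete_remez_extrapolation
    (d : ℕ) (hd : 1 ≤ d) (δ : ℝ) (hδ : 0 < δ)
    (x : Fin (d + 1) → ℝ) (hx : ∀ j, x j ∈ Set.Icc (0 : ℝ) 1)
    (hsep : ∀ i j, i ≠ j → δ ≤ |x i - x j|)
    (p : Polynomial ℝ) (hp : p.natDegree ≤ d)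
    (L : ℝ) (hL : 1 ≤ L) :
    |p.eval L| ≤ (Real.exp 2 * (δ * d)⁻¹ * L) ^ d * ⨆ j, |p.eval (x j)| :=
  discrete_remez_extrapolation_general d δ hδ x hx hsep p hp L hL
end

section
/- Let $A$ be a random matrix in $\mathbb{R}^{n \times n}$ with i.i.d. standard Gaussian entries, and let $g : \mathbb{R}^{n \times n} \to \mathbb{R}$ be a measurable function such that $||\mathrm{Per}(A)|^2 - g(A)| \leq \varepsilon$ holds with probability at least $1 - \delta$. Let $B$ be an arbitrary fixed matrix with entries bounded in absolute value by $1$, and let $t \in \mathbb{R}$. Then $||\mathrm{Per}(A + tB)|^2 - g(A + tB)| \leq \varepsilon$ holds with probability at least $1 - e^{\|tB\|^2/2}\, \delta^{1/2}$, where $\|\cdot\|$ is the Hilbert-Schmidt (Frobenius) norm. -/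
open Real MeasureTheory

/-- The permanent of an `n × n` real matrix (given as a function `Fin n → Fin n → ℝ`). -/
noncomputable def matPerm (n : ℕ) (A : Fin n → Fin n → ℝ) : ℝ :=
  ∑ σ : Equiv.Perm (Fin n), ∏ i, A i (σ i)

/-- The standard Gaussian probability measure on `n × n` real matrices, viewed as `ℝ^{n²}`. -/
noncomputable def matrixGaussian (n : ℕ) : Measure (Fin n → Fin n → ℝ) :=
  (volume : Measure (Fin n → Fin n → ℝ)).withDensity fun A =>
    ENNReal.ofReal ((2 * Real.pi) ^ (-((n : ℝ) ^ 2) / 2) *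
      Real.exp (-(∑ i, ∑ j, (A i j) ^ 2) / 2))

/-!
Translating the standard Gaussian measure `γ` on `ℝ^{n×n}` by a matrix `C` produces the measure
with density `ρ_C A = exp (⟪A, C⟫ - ‖C‖² / 2)` with respect to `γ` (Cameron–Martin). Since
`ρ_C² = exp ‖C‖² • ρ_{2C}` and `ρ_{2C}` is again a probability density, `∫ ρ_C² dγ = exp ‖C‖²`, so
Cauchy–Schwarz bounds the `γ`-mass of `E - C` by `exp (‖C‖² / 2) * γ(E)^{1/2}` for every measurable
`E`. Applied with `C = tB` to the set `E` where `g` fails to approximate `|Per|²`, whose mass is at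
most `δ`, this is the claim.
-/

open ProbabilityTheory
open scoped ENNReal

theorem ENNReal.ofReal_rpow_one_half (x : ℝ) :
    ENNReal.ofReal x ^ (1 / 2 : ℝ) = ENNReal.ofReal √x := by
  rcases le_total 0 x with hx | hx
  · rw [ENNReal.ofReal_rpow_of_nonneg hx (by norm_num), Real.sqrt_eq_rpow]
  · rw [ENNReal.ofReal_of_nonpos hx, Real.sqrt_eq_zero'.mpr hx, ENNReal.ofReal_zero,
      ENNReal.zero_rpow_of_pos (by norm_num)]

section Complement

variable {α : Type*} [MeasurableSpace α] {μ : Measure α} [IsProbabilityMeasure μ] {s : Set α}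

theorem prob_compl_le_ofReal_of_ofReal_one_sub_le (hs : MeasurableSet s) {δ : ℝ}
    (h : ENNReal.ofReal (1 - δ) ≤ μ s) : μ sᶜ ≤ ENNReal.ofReal δ := by
  rw [prob_compl_eq_one_sub hs, tsub_le_iff_right]
  calc 1 = ENNReal.ofReal (δ + (1 - δ)) := by simp
    _ ≤ ENNReal.ofReal δ + ENNReal.ofReal (1 - δ) := ENNReal.ofReal_add_le
    _ ≤ ENNReal.ofReal δ + μ s := by gcongr

theorem ofReal_one_sub_le_prob_of_prob_compl_le (hs : MeasurableSet s) {δ : ℝ} (hδ : 0 ≤ δ)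
    (h : μ sᶜ ≤ ENNReal.ofReal δ) : ENNReal.ofReal (1 - δ) ≤ μ s := by
  have hcompl := prob_compl_eq_one_sub (μ := μ) hs.compl
  rw [compl_compl] at hcompl
  rw [ENNReal.ofReal_sub _ hδ, ENNReal.ofReal_one, hcompl]
  exact tsub_le_tsub_left h 1

end Complement

theorem withDensity_apply_le_rpow_mul_lintegral_sq {α : Type*} [MeasurableSpace α]
    (μ : Measure α) {f : α → ℝ≥0∞} (hf : AEMeasurable f μ) {s : Set α} (hs : MeasurableSet s) :
    μ.withDensity f s ≤ μ s ^ (1 / 2 : ℝ) * (∫⁻ a, f a ^ 2 ∂μ) ^ (1 / 2 : ℝ) := by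
  have hholder := ENNReal.lintegral_mul_le_Lp_mul_Lq (μ.restrict s) Real.HolderConjugate.two_two
    (aemeasurable_const (b := (1 : ℝ≥0∞))) hf.restrict
  simp only [Pi.mul_apply, one_mul, ENNReal.rpow_two, one_pow, lintegral_one,
    Measure.restrict_apply_univ] at hholder
  calc μ.withDensity f s ≤ μ s ^ (1 / 2 : ℝ) * (∫⁻ a in s, f a ^ 2 ∂μ) ^ (1 / 2 : ℝ) := by
        rwa [withDensity_apply _ hs]
    _ ≤ μ s ^ (1 / 2 : ℝ) * (∫⁻ a, f a ^ 2 ∂μ) ^ (1 / 2 : ℝ) := by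
        gcongr
        exact Measure.restrict_le_self

noncomputable def matrixGaussianPDF (n : ℕ) (A : Fin n → Fin n → ℝ) : ℝ :=
  (2 * π) ^ (-((n : ℝ) ^ 2) / 2) * exp (-(∑ i, ∑ j, (A i j) ^ 2) / 2)

noncomputable def cameronMartinDensity (n : ℕ) (C A : Fin n → Fin n → ℝ) : ℝ :=
  exp (∑ i, ∑ j, A i j * C i j - (∑ i, ∑ j, C i j ^ 2) / 2)

section MatrixGaussian

variable {n : ℕ}

theorem measurable_matPerm : Measurable (matPerm n) := by
  unfold matPerm
  fun_prop

theorem matrixGaussian_eq_withDensity :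
    matrixGaussian n = volume.withDensity fun A => ENNReal.ofReal (matrixGaussianPDF n A) := rfl

theorem matrixGaussianPDF_eq_prod (A : Fin n → Fin n → ℝ) :
    matrixGaussianPDF n A = ∏ i, ∏ j, gaussianPDFReal 0 1 (A i j) := by
  simp only [matrixGaussianPDF, gaussianPDFReal, Finset.prod_mul_distrib, Finset.prod_const,
    Finset.card_univ, Fintype.card_fin, ← Real.exp_sum, ← pow_mul]
  congr 1
  · rw [NNReal.coe_one, mul_one, Real.sqrt_eq_rpow, ← Real.rpow_neg_one,
      ← Real.rpow_mul (by positivity), ← Real.rpow_natCast _ (n * n),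
      ← Real.rpow_mul (by positivity)]
    push_cast
    ring_nf
  · simp [Finset.sum_div, neg_div]

theorem measurable_matrixGaussianPDF : Measurable (matrixGaussianPDF n) := by
  unfold matrixGaussianPDF
  fun_prop

theorem matrixGaussianPDF_pos (A : Fin n → Fin n → ℝ) : 0 < matrixGaussianPDF n A := by
  unfold matrixGaussianPDF
  positivity

instance : IsProbabilityMeasure (matrixGaussian n) := by
  have hpdf : matrixGaussianPDF n = fun A => ∏ i, ∏ j, gaussianPDFReal 0 1 (A i j) :=
    funext matrixGaussianPDF_eq_prod
  have hint : Integrable (matrixGaussianPDF n) := by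
    rw [hpdf]
    exact Integrable.fintype_prod fun _ =>
      Integrable.fintype_prod fun _ => integrable_gaussianPDFReal 0 1
  have hone : ∫ A, matrixGaussianPDF n A = 1 := by
    rw [hpdf, integral_fintype_prod_volume_eq_prod
      (fun _ (y : Fin n → ℝ) => ∏ j, gaussianPDFReal 0 1 (y j))]
    simp [integral_fintype_prod_volume_eq_prod, integral_gaussianPDFReal_eq_one]
  constructor
  rw [matrixGaussian_eq_withDensity, withDensity_apply _ MeasurableSet.univ, setLIntegral_univ,
    ← ofReal_integral_eq_lintegral_ofReal hint
      (ae_of_all _ fun A => (matrixGaussianPDF_pos A).le), hone, ENNReal.ofReal_one]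

theorem measurable_cameronMartinDensity (C : Fin n → Fin n → ℝ) :
    Measurable (cameronMartinDensity n C) := by
  unfold cameronMartinDensity
  fun_prop

theorem cameronMartinDensity_pos (C A : Fin n → Fin n → ℝ) : 0 < cameronMartinDensity n C A :=
  exp_pos _

theorem matrixGaussianPDF_mul_cameronMartinDensity (C A : Fin n → Fin n → ℝ) :
    matrixGaussianPDF n A * cameronMartinDensity n C A = matrixGaussianPDF n (A - C) := by
  simp only [matrixGaussianPDF, cameronMartinDensity, mul_assoc, ← Real.exp_add, Pi.sub_apply]
  have hsq : ∀ i j, (A i j - C i j) ^ 2 = A i j ^ 2 - 2 * (A i j * C i j) + C i j ^ 2 :=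
    fun _ _ => by ring
  simp only [hsq, Finset.sum_add_distrib, Finset.sum_sub_distrib, ← Finset.mul_sum]
  ring_nf

theorem cameronMartinDensity_sq (C A : Fin n → Fin n → ℝ) :
    cameronMartinDensity n C A ^ 2 =
      exp (∑ i, ∑ j, C i j ^ 2) * cameronMartinDensity n ((2 : ℝ) • C) A := by
  simp only [cameronMartinDensity, ← Real.exp_nat_mul, ← Real.exp_add, Pi.smul_apply,
    smul_eq_mul]
  have hAC : ∀ i j, A i j * (2 * C i j) = 2 * (A i j * C i j) := fun _ _ => by ring
  have hCC : ∀ i j, (2 * C i j) ^ 2 = 4 * C i j ^ 2 := fun _ _ => by ring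
  simp only [hAC, hCC, ← Finset.mul_sum]
  ring_nf

theorem matrixGaussian_map_add_const (C : Fin n → Fin n → ℝ) :
    (matrixGaussian n).map (· + C) =
      (matrixGaussian n).withDensity fun A => ENNReal.ofReal (cameronMartinDensity n C A) := by
  have hpdf := (measurable_matrixGaussianPDF (n := n)).ennreal_ofReal
  have hcm := (measurable_cameronMartinDensity C).ennreal_ofReal
  ext s hs
  rw [Measure.map_apply (measurable_add_const C) hs, matrixGaussian_eq_withDensity,
    ← withDensity_mul volume hpdf hcm, withDensity_apply _ hs,
    withDensity_apply _ (measurable_add_const C hs)]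
  simp only [Pi.mul_apply, ← ENNReal.ofReal_mul (matrixGaussianPDF_pos _).le,
    matrixGaussianPDF_mul_cameronMartinDensity]
  simpa using (measurePreserving_add_right volume C).setLIntegral_comp_preimage hs
    (hpdf.comp (measurable_sub_const C))

theorem lintegral_cameronMartinDensity (C : Fin n → Fin n → ℝ) :
    ∫⁻ A, ENNReal.ofReal (cameronMartinDensity n C A) ∂matrixGaussian n = 1 := by
  rw [← setLIntegral_univ, ← withDensity_apply _ MeasurableSet.univ,
    ← matrixGaussian_map_add_const, Measure.map_apply (measurable_add_const C) MeasurableSet.univ,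
    Set.preimage_univ, measure_univ]

theorem lintegral_cameronMartinDensity_sq (C : Fin n → Fin n → ℝ) :
    ∫⁻ A, ENNReal.ofReal (cameronMartinDensity n C A) ^ 2 ∂matrixGaussian n =
      ENNReal.ofReal (exp (∑ i, ∑ j, C i j ^ 2)) := by
  have hpt : ∀ A, ENNReal.ofReal (cameronMartinDensity n C A) ^ 2 =
      ENNReal.ofReal (exp (∑ i, ∑ j, C i j ^ 2)) *
        ENNReal.ofReal (cameronMartinDensity n ((2 : ℝ) • C) A) := fun A => by
    rw [← ENNReal.ofReal_pow (cameronMartinDensity_pos C A).le, cameronMartinDensity_sq,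
      ENNReal.ofReal_mul (exp_pos _).le]
  rw [lintegral_congr hpt,
    lintegral_const_mul _ (measurable_cameronMartinDensity _).ennreal_ofReal,
    lintegral_cameronMartinDensity, mul_one]

theorem matrixGaussian_preimage_add_const_le (C : Fin n → Fin n → ℝ)
    {s : Set (Fin n → Fin n → ℝ)} (hs : MeasurableSet s) :
    matrixGaussian n ((· + C) ⁻¹' s) ≤
      ENNReal.ofReal (exp ((∑ i, ∑ j, C i j ^ 2) / 2)) * matrixGaussian n s ^ (1 / 2 : ℝ) := by
  rw [← Measure.map_apply (measurable_add_const C) hs, matrixGaussian_map_add_const, mul_comm]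
  refine (withDensity_apply_le_rpow_mul_lintegral_sq _
    (measurable_cameronMartinDensity C).ennreal_ofReal.aemeasurable hs).trans_eq ?_
  rw [lintegral_cameronMartinDensity_sq,
    ENNReal.ofReal_rpow_of_nonneg (exp_pos _).le (by norm_num), ← exp_mul]
  ring_nf

end MatrixGaussian

theorem rare_events_lemma_I_general
    (n : ℕ) (g : (Fin n → Fin n → ℝ) → ℝ) (hg : Measurable g)
    (ε δ : ℝ)
    (hgood : ENNReal.ofReal (1 - δ) ≤
      matrixGaussian n {A | |(|matPerm n A| ^ 2 - g A)| ≤ ε})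
    (B : Fin n → Fin n → ℝ) (t : ℝ) :
    ENNReal.ofReal (1 - Real.exp ((∑ i, ∑ j, (t * B i j) ^ 2) / 2) * Real.sqrt δ) ≤
      matrixGaussian n {A | |(|matPerm n (fun i j => A i j + t * B i j)| ^ 2 -
        g (fun i j => A i j + t * B i j))| ≤ ε} := by
  set C : Fin n → Fin n → ℝ := fun i j => t * B i j
  set S := {A | |(|matPerm n A| ^ 2 - g A)| ≤ ε}
  have hS : MeasurableSet S :=
    measurableSet_le ((measurable_matPerm.abs.pow_const 2).sub hg).abs measurable_const
  have hbad : matrixGaussian n Sᶜ ≤ ENNReal.ofReal δ :=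
    prob_compl_le_ofReal_of_ofReal_one_sub_le hS hgood
  change _ ≤ matrixGaussian n ((· + C) ⁻¹' S)
  refine ofReal_one_sub_le_prob_of_prob_compl_le (measurable_add_const C hS) (by positivity) ?_
  calc matrixGaussian n ((· + C) ⁻¹' Sᶜ)
      ≤ ENNReal.ofReal (exp ((∑ i, ∑ j, C i j ^ 2) / 2)) * matrixGaussian n Sᶜ ^ (1 / 2 : ℝ) :=
        matrixGaussian_preimage_add_const_le C hS.compl
    _ ≤ ENNReal.ofReal (exp ((∑ i, ∑ j, C i j ^ 2) / 2)) * ENNReal.ofReal δ ^ (1 / 2 : ℝ) := by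
        gcongr
    _ = ENNReal.ofReal (exp ((∑ i, ∑ j, C i j ^ 2) / 2) * √δ) := by
        rw [ENNReal.ofReal_rpow_one_half, ← ENNReal.ofReal_mul (exp_pos _).le]

/-- Rare events lemma I: if `g` approximates `|Per(A)|²` to within `ε` with probability at
least `1 - δ` over an i.i.d. standard Gaussian matrix `A`, then for any fixed matrix `B` with
entries bounded by `1` and any real `t`, `g` approximates `|Per(A + tB)|²` to within `ε` with
probability at least `1 - e^{‖tB‖²/2} δ^{1/2}`. -/
theorem rare_events_lemma_I
    (n : ℕ) (g : (Fin n → Fin n → ℝ) → ℝ) (hg : Measurable g)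
    (ε δ : ℝ) (hε : 0 ≤ ε) (hδ : 0 ≤ δ)
    (hgood : ENNReal.ofReal (1 - δ) ≤
      matrixGaussian n {A | |(|matPerm n A| ^ 2 - g A)| ≤ ε})
    (B : Fin n → Fin n → ℝ) (hB : ∀ i j, |B i j| ≤ 1) (t : ℝ) :
    ENNReal.ofReal (1 - Real.exp ((∑ i, ∑ j, (t * B i j) ^ 2) / 2) * Real.sqrt δ) ≤
      matrixGaussian n {A | |(|matPerm n (fun i j => A i j + t * B i j)| ^ 2 -
        g (fun i j => A i j + t * B i j))| ≤ ε} :=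
  rare_events_lemma_I_general n g hg ε δ hgood B t
end

section
/- Let $p$ and $q$ be real polynomials of degree at most $d$, and let $S \subset [-\ell, \ell]$ be a $\delta$-separated set of points with $|S| \geq 2d+1$. Suppose $\sup_{x \in S} |p(x)^2 - q(x)^2| \leq \gamma$ and $\inf_{x \in S} |q(x)| \geq K > 0$. Then the leading coefficients satisfy $||p_d| - |q_d|| \leq 2^{2d+1} e^{2d} (d\delta)^{-d} K^{-1} \gamma$. -/
open Real Polynomial

/-!
Writing `a = (p - q)(z)` and `b = (p + q)(z)`, at every `z ∈ S` we have `|a b| ≤ γ` and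
`|a| + |b| ≥ |b - a| = 2|q(z)| ≥ 2K`, so `|a| ≤ γ/K` or `|b| ≤ γ/K`. By pigeonhole one of the
polynomials `p ∓ q` is bounded by `γ/K` on `d + 1` points of `S`. Lagrange interpolation on these
points expresses its coefficient of `x^d` as `∑ᵢ f(xᵢ) / ∏_{j ≠ i} (xᵢ - xⱼ)`, and `δ`-separation
gives `∏_{j ≠ i} |xᵢ - xⱼ| ≥ δ^d i! (d - i)!` once the points are sorted, so the coefficient is at
most `(γ/K) 2^d / (d! δ^d)`. Finally `||p_d| - |q_d|| ≤ |p_d ∓ q_d|`, and `d^d ≤ e^d d!`.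
-/

open Finset
open scoped Nat

lemma abs_le_div_or_abs_le_div_of_abs_mul_le {a b γ K : ℝ} (hK : 0 < K) (hab : |a * b| ≤ γ)
    (hsum : 2 * K ≤ |a| + |b|) : |a| ≤ γ / K ∨ |b| ≤ γ / K := by
  rw [abs_mul] at hab
  rcases le_total |a| |b| with h | h
  · left
    rw [le_div_iff₀ hK]
    nlinarith [abs_nonneg a]
  · right
    rw [le_div_iff₀ hK]
    nlinarith [abs_nonneg b]

lemma Finset.le_card_filter_or_le_card_filter {α : Type*} [DecidableEq α] {s : Finset α}
    {P Q : α → Prop} [DecidablePred P] [DecidablePred Q] {n : ℕ} (h : ∀ x ∈ s, P x ∨ Q x)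
    (hs : 2 * n + 1 ≤ #s) :
    n + 1 ≤ #(s.filter P) ∨ n + 1 ≤ #(s.filter Q) := by
  have : #s ≤ #(s.filter P) + #(s.filter Q) := by
    calc #s = #(s.filter fun x => P x ∨ Q x) := by rw [filter_true_of_mem h]
      _ ≤ _ := by rw [filter_or]; exact card_union_le _ _
  omega

lemma prod_erase_range_abs_natCast_sub {n i : ℕ} (hi : i ≤ n) :
    ∏ j ∈ (range (n + 1)).erase i, |(i : ℝ) - j| = (i ! * (n - i)! : ℕ) := by
  have hsplit : (range (n + 1)).erase i = range i ∪ Ico (i + 1) (n + 1) := by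
    ext k
    simp only [mem_erase, mem_range, mem_union, mem_Ico]
    omega
  have hdisj : Disjoint (range i) (Ico (i + 1) (n + 1)) := by
    rw [disjoint_left]
    intro k hk hk'
    simp only [mem_range, mem_Ico] at hk hk'
    omega
  have hbelow : ∏ j ∈ range i, |(i : ℝ) - j| = (i ! : ℕ) := by
    rw [← Nat.descFactorial_self, Nat.descFactorial_eq_prod_range, Nat.cast_prod]
    refine prod_congr rfl fun j hj => ?_
    have hji : (j : ℝ) ≤ i := by exact_mod_cast (mem_range.1 hj).le
    rw [Nat.cast_sub (mem_range.1 hj).le, abs_of_nonneg (sub_nonneg.2 hji)]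
  have habove : ∏ j ∈ Ico (i + 1) (n + 1), |(i : ℝ) - j| = ((n - i)! : ℕ) := by
    rw [prod_Ico_eq_prod_range, ← prod_range_add_one_eq_factorial, Nat.cast_prod,
      show n + 1 - (i + 1) = n - i by omega]
    refine prod_congr rfl fun k _ => ?_
    rw [abs_sub_comm]
    push_cast
    rw [abs_of_nonneg (by linarith)]
    ring
  rw [hsplit, prod_union hdisj, hbelow, habove, Nat.cast_mul]

lemma Fin.abs_val_sub_mul_le_abs_sub {n : ℕ} {x : Fin (n + 1) → ℝ} {δ : ℝ}
    (hx : ∀ k : Fin n, δ ≤ x k.succ - x k.castSucc) (i j : Fin (n + 1)) :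
    |(i : ℝ) - j| * δ ≤ |x i - x j| := by
  have hmono : Monotone fun k : Fin (n + 1) => x k - k * δ := by
    refine Fin.monotone_iff_le_succ.2 fun k => ?_
    simp only [Fin.val_castSucc, Fin.val_succ, Nat.cast_add, Nat.cast_one]
    linarith [hx k]
  rcases le_total j i with h | h
  · have hji : (j : ℝ) ≤ i := by exact_mod_cast h
    rw [abs_of_nonneg (sub_nonneg.2 hji)]
    linarith [hmono h, le_abs_self (x i - x j)]
  · have hij : (i : ℝ) ≤ j := by exact_mod_cast h
    rw [abs_of_nonpos (sub_nonpos.2 hij)]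
    linarith [hmono h, neg_abs_le (x i - x j)]

lemma Fin.pow_mul_factorial_mul_factorial_le_prod_abs_sub {n : ℕ} {x : Fin (n + 1) → ℝ} {δ : ℝ}
    (hδ : 0 ≤ δ) (hx : ∀ k : Fin n, δ ≤ x k.succ - x k.castSucc) (i : Fin (n + 1)) :
    δ ^ n * ((i ! * (n - i)! : ℕ) : ℝ) ≤ ∏ j ∈ univ.erase i, |x i - x j| := by
  have hnodes : ∏ j ∈ univ.erase i, |(i : ℝ) - j| = ((i ! * (n - i)! : ℕ) : ℝ) := by
    rw [← prod_erase_range_abs_natCast_sub (Nat.lt_succ_iff.1 i.2), ← Nat.Iio_eq_range,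
      ← Fin.map_valEmbedding_univ]
    erw [← map_erase, prod_map]
    rfl
  calc δ ^ n * ((i ! * (n - i)! : ℕ) : ℝ) = ∏ j ∈ univ.erase i, (|(i : ℝ) - j| * δ) := by
        rw [prod_mul_distrib, Finset.prod_const, card_erase_of_mem (mem_univ i), card_univ,
          Fintype.card_fin, Nat.add_sub_cancel, hnodes, mul_comm]
    _ ≤ ∏ j ∈ univ.erase i, |x i - x j| :=
        prod_le_prod (fun j _ => by positivity) fun j _ => Fin.abs_val_sub_mul_le_abs_sub hx i j

lemma Fin.sum_inv_prod_abs_sub_le {n : ℕ} {x : Fin (n + 1) → ℝ} {δ : ℝ} (hδ : 0 < δ)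
    (hx : ∀ k : Fin n, δ ≤ x k.succ - x k.castSucc) :
    ∑ i, (∏ j ∈ univ.erase i, |x i - x j|)⁻¹ ≤ 2 ^ n / (n ! * δ ^ n) := by
  calc ∑ i, (∏ j ∈ univ.erase i, |x i - x j|)⁻¹
      ≤ ∑ i : Fin (n + 1), (δ ^ n * ((i ! * (n - i)! : ℕ) : ℝ))⁻¹ :=
        sum_le_sum fun i _ => inv_anti₀ (by positivity)
          (Fin.pow_mul_factorial_mul_factorial_le_prod_abs_sub hδ.le hx i)
    _ = ∑ i : Fin (n + 1), (n.choose i : ℝ) / (n ! * δ ^ n) := by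
        refine sum_congr rfl fun i _ => ?_
        rw [Nat.cast_choose ℝ (Nat.lt_succ_iff.1 i.2)]
        push_cast
        field_simp
    _ = 2 ^ n / (n ! * δ ^ n) := by
        rw [← sum_div, Fin.sum_univ_eq_sum_range (fun k => (n.choose k : ℝ)), ← Nat.cast_sum,
          Nat.sum_range_choose, Nat.cast_pow, Nat.cast_ofNat]

lemma Finset.sum_inv_prod_abs_sub_le {s : Finset ℝ} {n : ℕ} {δ : ℝ} (hδ : 0 < δ)
    (hs : #s = n + 1) (hsep : ∀ x ∈ s, ∀ y ∈ s, x ≠ y → δ ≤ |x - y|) :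
    ∑ x ∈ s, (∏ y ∈ s.erase x, |x - y|)⁻¹ ≤ 2 ^ n / (n ! * δ ^ n) := by
  set e := s.orderEmbOfFin hs
  have hgap : ∀ k : Fin n, δ ≤ e k.succ - e k.castSucc := by
    intro k
    have hlt : e k.castSucc < e k.succ := e.strictMono Fin.castSucc_lt_succ
    have := hsep _ (s.orderEmbOfFin_mem hs k.succ) _ (s.orderEmbOfFin_mem hs k.castSucc) hlt.ne'
    rwa [abs_of_pos (sub_pos.2 hlt)] at this
  have hs' : s = univ.map e.toEmbedding := (map_orderEmbOfFin_univ s hs).symm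
  calc ∑ x ∈ s, (∏ y ∈ s.erase x, |x - y|)⁻¹ = ∑ i, (∏ j ∈ univ.erase i, |e i - e j|)⁻¹ := by
        conv_lhs => rw [hs']
        rw [sum_map]
        refine sum_congr rfl fun i _ => ?_
        rw [← RelEmbedding.coe_toEmbedding, ← map_erase, prod_map]
    _ ≤ 2 ^ n / (n ! * δ ^ n) := Fin.sum_inv_prod_abs_sub_le hδ hgap

lemma Polynomial.abs_coeff_le_of_card_eq {f : ℝ[X]} {n : ℕ} (hf : f.natDegree ≤ n)
    {s : Finset ℝ} {δ M : ℝ} (hδ : 0 < δ) (hs : #s = n + 1)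
    (hsep : ∀ x ∈ s, ∀ y ∈ s, x ≠ y → δ ≤ |x - y|) (hM : ∀ x ∈ s, |f.eval x| ≤ M) :
    |f.coeff n| ≤ M * (2 ^ n / (n ! * δ ^ n)) := by
  have hdeg : f.degree < #s := by
    rw [hs]
    exact (degree_le_natDegree.trans (WithBot.coe_le_coe.2 hf)).trans_lt
      (WithBot.coe_lt_coe.2 n.lt_succ_self)
  have hcoeff := Lagrange.coeff_eq_sum (Set.injOn_id _) hdeg
  rw [hs, Nat.add_sub_cancel] at hcoeff
  calc |f.coeff n| ≤ ∑ x ∈ s, |f.eval x / ∏ y ∈ s.erase x, (x - y)| := by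
        rw [hcoeff]
        exact abs_sum_le_sum_abs _ _
    _ ≤ ∑ x ∈ s, M * (∏ y ∈ s.erase x, |x - y|)⁻¹ := by
        refine sum_le_sum fun x hx => ?_
        rw [abs_div, abs_prod, div_eq_mul_inv]
        exact mul_le_mul_of_nonneg_right (hM x hx) (by positivity)
    _ ≤ M * (2 ^ n / (n ! * δ ^ n)) := by
        obtain ⟨x, hx⟩ : s.Nonempty := card_pos.1 (by omega)
        rw [← mul_sum]
        exact mul_le_mul_of_nonneg_left (sum_inv_prod_abs_sub_le hδ hs hsep)
          ((abs_nonneg _).trans (hM x hx))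

lemma Polynomial.abs_coeff_le_of_le_card_filter {f : ℝ[X]} {n : ℕ} (hf : f.natDegree ≤ n)
    {s : Finset ℝ} {δ M : ℝ} (hδ : 0 < δ) (hsep : ∀ x ∈ s, ∀ y ∈ s, x ≠ y → δ ≤ |x - y|)
    (hs : n + 1 ≤ #{x ∈ s | |f.eval x| ≤ M}) :
    |f.coeff n| ≤ M * (2 ^ n / (n ! * δ ^ n)) := by
  obtain ⟨t, hts, ht⟩ := exists_subset_card_eq hs
  have hts' : t ⊆ s := hts.trans (filter_subset _ _)
  exact abs_coeff_le_of_card_eq hf hδ ht (fun x hx y hy => hsep x (hts' hx) y (hts' hy))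
    fun x hx => (mem_filter.1 (hts hx)).2

lemma two_pow_div_factorial_mul_pow_le (n : ℕ) {δ : ℝ} (hδ : 0 < δ) :
    2 ^ n / (n ! * δ ^ n) ≤ 2 ^ (2 * n + 1) * exp (2 * n) * ((n : ℝ) * δ)⁻¹ ^ n := by
  rcases n.eq_zero_or_pos with rfl | hn
  · norm_num
  have hstirling : (n : ℝ) ^ n / n ! ≤ exp n := pow_div_factorial_le_exp _ n.cast_nonneg n
  calc 2 ^ n / (n ! * δ ^ n) = 2 ^ n * ((n : ℝ) ^ n / n !) * ((n : ℝ) * δ)⁻¹ ^ n := by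
        have : (n : ℝ) ≠ 0 := by positivity
        rw [inv_pow, mul_pow]
        field_simp
    _ ≤ 2 ^ (2 * n + 1) * exp (2 * n) * ((n : ℝ) * δ)⁻¹ ^ n := by
        gcongr
        · exact one_le_two
        · omega
        · exact hstirling.trans (exp_le_exp.2 (by linarith [n.cast_nonneg (α := ℝ)]))

theorem square_method_coefficient_extraction_general
    (d : ℕ) (δ γ K : ℝ) (hδ : 0 < δ) (hγ : 0 < γ) (hK : 0 < K)
    (p q : Polynomial ℝ) (hp : p.natDegree ≤ d) (hq : q.natDegree ≤ d)
    (S : Finset ℝ) (hScard : 2 * d + 1 ≤ S.card)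
    (hSsep : ∀ x ∈ S, ∀ y ∈ S, x ≠ y → δ ≤ |x - y|)
    (happrox : ∀ x ∈ S, |p.eval x ^ 2 - q.eval x ^ 2| ≤ γ)
    (hlow : ∀ x ∈ S, K ≤ |q.eval x|) :
    |(|p.coeff d| - |q.coeff d|)| ≤
      2 ^ (2 * d + 1) * Real.exp (2 * d) * ((d : ℝ) * δ)⁻¹ ^ d * K⁻¹ * γ := by
  have hsmall : ∀ z ∈ S, |(p - q).eval z| ≤ γ / K ∨ |(p + q).eval z| ≤ γ / K := by
    intro z hz
    refine abs_le_div_or_abs_le_div_of_abs_mul_le hK ?_ ?_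
    · convert happrox z hz using 2
      rw [eval_sub, eval_add]
      ring
    · calc 2 * K ≤ |2 * q.eval z| := by rw [abs_mul, abs_two]; linarith [hlow z hz]
        _ = |(p + q).eval z - (p - q).eval z| := by rw [eval_add, eval_sub]; ring_nf
        _ ≤ _ := (abs_sub _ _).trans_eq (add_comm _ _)
  have hcoeff : |(|p.coeff d| - |q.coeff d|)| ≤ γ / K * (2 ^ d / (d ! * δ ^ d)) := by
    rcases le_card_filter_or_le_card_filter hsmall hScard with h | h
    · calc _ ≤ |(p - q).coeff d| := by rw [coeff_sub]; exact abs_abs_sub_abs_le_abs_sub _ _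
        _ ≤ _ := abs_coeff_le_of_le_card_filter
          (max_self d ▸ natDegree_sub_le_of_le hp hq) hδ hSsep h
    · calc _ ≤ |(p + q).coeff d| := by
            simpa [coeff_add] using abs_abs_sub_abs_le_abs_sub (p.coeff d) (-q.coeff d)
        _ ≤ _ := abs_coeff_le_of_le_card_filter (natDegree_add_le_of_degree_le hp hq) hδ hSsep h
  calc _ ≤ γ / K * (2 ^ d / (d ! * δ ^ d)) := hcoeff
    _ ≤ γ / K * (2 ^ (2 * d + 1) * exp (2 * d) * ((d : ℝ) * δ)⁻¹ ^ d) := by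
        gcongr
        exact two_pow_div_factorial_mul_pow_le d hδ
    _ = _ := by ring

/-- The square method for coefficient extraction: if `p²` approximates `q²` to within `γ` on a
`δ`-separated set `S ⊆ [-ℓ,ℓ]` of at least `2d+1` points, and `|q| ≥ K` on `S`, then the top
coefficients satisfy `||p_d| - |q_d|| ≤ 2^{2d+1} e^{2d} (dδ)^{-d} K⁻¹ γ`. -/
theorem square_method_coefficient_extraction
    (d : ℕ) (hd : 1 ≤ d) (ℓ δ γ K : ℝ) (hℓ : 0 < ℓ) (hδ : 0 < δ) (hγ : 0 < γ) (hK : 0 < K)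
    (p q : Polynomial ℝ) (hp : p.natDegree ≤ d) (hq : q.natDegree ≤ d)
    (S : Finset ℝ) (hScard : 2 * d + 1 ≤ S.card)
    (hSmem : ∀ x ∈ S, x ∈ Set.Icc (-ℓ) ℓ)
    (hSsep : ∀ x ∈ S, ∀ y ∈ S, x ≠ y → δ ≤ |x - y|)
    (happrox : ∀ x ∈ S, |p.eval x ^ 2 - q.eval x ^ 2| ≤ γ)
    (hlow : ∀ x ∈ S, K ≤ |q.eval x|) :
    |(|p.coeff d| - |q.coeff d|)| ≤
      2 ^ (2 * d + 1) * Real.exp (2 * d) * ((d : ℝ) * δ)⁻¹ ^ d * K⁻¹ * γ :=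
  square_method_coefficient_extraction_general d δ γ K hδ hγ hK p q hp hq S hScard hSsep happrox
    hlow
end

section
/- Let $x_0, \ldots, x_d$ be $d+1$ distinct points in $[0,1]$ that are $\delta$-separated. Then for every index $j$, $\prod_{k \neq j} |x_j - x_k|^{-1} \leq e^{2d} (\delta d)^{-d}$, equivalently $\sum_{k \neq j} \log |x_j - x_k|^{-1} \leq 2d + d \log (d\delta)^{-1}$. -/
open Real Nat

lemma prod_Icc_id_eq_factorial' : ∀ n : ℕ, ∏ m ∈ Finset.Icc 1 n, m = n !
  | 0 => rfl
  | n + 1 => by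
    rw [← Finset.insert_Icc_right_eq_Icc_add_one (by omega), Finset.prod_insert (by simp),
      prod_Icc_id_eq_factorial' n, Nat.factorial_succ]

lemma sep_chain {ι : Type*} [DecidableEq ι] (x : ι → ℝ) (δ : ℝ) :
    ∀ (n : ℕ) (T : Finset ι) (y z : ℝ), T.card = n → y ≤ z →
    (∀ i ∈ T, y + δ ≤ x i) → (∀ i ∈ T, x i ≤ z) →
    (∀ i ∈ T, ∀ i' ∈ T, i ≠ i' → δ ≤ |x i - x i'|) →
    y + n * δ ≤ z := by
  intro n
  induction n with
  | zero => intro T y z hc hyz _ _ _; simpa using hyz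
  | succ n ih =>
    intro T y z hc hyz h1 h2 hsep
    have hT : T.Nonempty := Finset.card_pos.mp (by omega)
    obtain ⟨m, hm, hmin⟩ := T.exists_min_image x hT
    have key := ih (T.erase m) (x m) z
      (by rw [Finset.card_erase_of_mem hm, hc]; omega)
      (h2 m hm)
      (fun i hi => by
        have hi' := Finset.mem_of_mem_erase hi
        have hne : i ≠ m := Finset.ne_of_mem_erase hi
        have hs := hsep i hi' m hm hne
        have hle := hmin i hi'
        rw [abs_of_nonneg (by linarith)] at hs
        linarith)
      (fun i hi => h2 i (Finset.mem_of_mem_erase hi))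
      (fun i hi i' hi' hne =>
        hsep i (Finset.mem_of_mem_erase hi) i' (Finset.mem_of_mem_erase hi') hne)
    have hm1 := h1 m hm
    push_cast
    push_cast at key
    linarith

lemma side_prod {ι : Type*} [DecidableEq ι] (P : Finset ι) (y : ι → ℝ) (δ : ℝ) (hδ : 0 < δ)
    (hpos : ∀ k ∈ P, δ ≤ y k)
    (hsep : ∀ i ∈ P, ∀ i' ∈ P, i ≠ i' → δ ≤ |y i - y i'|) :
    δ ^ P.card * (P.card ! : ℝ) ≤ ∏ k ∈ P, y k := by
  classical
  set n := P.card with hn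
  set r : ι → ℕ := fun k => (P.filter (fun i => y i ≤ y k)).card with hr
  -- y injective on P
  have hyinj : ∀ i ∈ P, ∀ i' ∈ P, y i = y i' → i = i' := by
    intro i hi i' hi' h
    by_contra hne
    have := hsep i hi i' hi' hne
    rw [h] at this
    simp at this
    linarith
  -- lower bound via chain
  have hlb : ∀ k ∈ P, δ * r k ≤ y k := by
    intro k hk
    have := sep_chain y δ (r k) (P.filter (fun i => y i ≤ y k)) 0 (y k) rfl
      (le_trans hδ.le (hpos k hk))
      (fun i hi => by
        have := hpos i (Finset.mem_of_mem_filter i hi); linarith)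
      (fun i hi => (Finset.mem_filter.mp hi).2)
      (fun i hi i' hi' hne =>
        hsep i (Finset.mem_of_mem_filter i hi) i' (Finset.mem_of_mem_filter i' hi') hne)
    rw [zero_add] at this
    linarith [this]
  -- r injective on P
  have hrinj : ∀ i ∈ P, ∀ i' ∈ P, r i = r i' → i = i' := by
    intro i hi i' hi' h
    by_contra hne
    have hyne : y i ≠ y i' := fun he => hne (hyinj i hi i' hi' he)
    wlog hlt : y i < y i' generalizing i i'
    · exact this i' hi' i hi h.symm (Ne.symm hne) hyne.symm
        (lt_of_le_of_ne (not_lt.mp hlt) hyne.symm)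
    have hsub : P.filter (fun k => y k ≤ y i) ⊆ P.filter (fun k => y k ≤ y i') := by
      intro k hk
      rw [Finset.mem_filter] at *
      exact ⟨hk.1, hk.2.trans hlt.le⟩
    have hmem : i' ∈ P.filter (fun k => y k ≤ y i') := by
      rw [Finset.mem_filter]; exact ⟨hi', le_refl _⟩
    have hnmem : i' ∉ P.filter (fun k => y k ≤ y i) := by
      rw [Finset.mem_filter]; push_neg; intro _; linarith
    have : r i < r i' := Finset.card_lt_card (Finset.ssubset_iff_of_subset hsub |>.mpr ⟨i', hmem, hnmem⟩)
    omega
  -- r maps into Icc 1 n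
  have hrange : ∀ k ∈ P, r k ∈ Finset.Icc 1 n := by
    intro k hk
    rw [Finset.mem_Icc]
    constructor
    · have : k ∈ P.filter (fun i => y i ≤ y k) := by
        rw [Finset.mem_filter]; exact ⟨hk, le_refl _⟩
      exact Finset.card_pos.mpr ⟨k, this⟩
    · exact Finset.card_le_card (Finset.filter_subset _ _)
  -- image is exactly Icc 1 n
  have himg : P.image r = Finset.Icc 1 n := by
    apply Finset.eq_of_subset_of_card_le
    · intro m hm
      obtain ⟨k, hk, hkm⟩ := Finset.mem_image.mp hm
      exact hkm ▸ hrange k hk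
    · rw [Nat.card_Icc]
      rw [Finset.card_image_of_injOn (fun i hi i' hi' => hrinj i hi i' hi')]
      omega
  have hprod_r : ∏ k ∈ P, (r k : ℝ) = (n ! : ℝ) := by
    rw [← Finset.prod_image (fun i hi i' hi' => hrinj i hi i' hi'), himg]
    rw [← Nat.cast_prod, prod_Icc_id_eq_factorial' n]
  calc δ ^ n * (n ! : ℝ) = ∏ k ∈ P, (δ * r k) := by
        rw [Finset.prod_mul_distrib, Finset.prod_const, hprod_r]
    _ ≤ ∏ k ∈ P, y k := by
        apply Finset.prod_le_prod
        · intro k hk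
          positivity
        · intro k hk
          exact hlb k hk

/-- Denominator bound in Lagrange interpolation: for `δ`-separated points in `[0,1]`,
`∏_{k ≠ j} |x_j - x_k|⁻¹ ≤ e^{2d} (δ d)^{-d}`. -/
theorem lagrange_denominator_bound
    (d : ℕ) (hd : 1 ≤ d) (δ : ℝ) (hδ : 0 < δ) (hδd : (d : ℝ) * δ ≤ 1)
    (x : Fin (d + 1) → ℝ) (hx : ∀ j, x j ∈ Set.Icc (0 : ℝ) 1)
    (hsep : ∀ i j, i ≠ j → δ ≤ |x i - x j|) :
    ∀ j, ∏ k ∈ Finset.univ.erase j, |x j - x k|⁻¹ ≤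
      Real.exp (2 * d) * (δ * d)⁻¹ ^ d := by
  intro j
  classical
  set S := Finset.univ.erase j with hS
  have hScard : S.card = d := by
    rw [hS, Finset.card_erase_of_mem (Finset.mem_univ j), Finset.card_univ]
    simp
  set R := S.filter (fun k => x j < x k) with hR
  set L := S.filter (fun k => ¬ x j < x k) with hL
  set a := L.card with ha
  set b := R.card with hb
  have hab : a + b = d := by
    rw [ha, hb, hL, hR, add_comm]
    rw [Finset.card_filter_add_card_filter_not]
    exact hScard
  have hsepj : ∀ k ∈ S, δ ≤ |x j - x k| := by
    intro k hk
    exact hsep j k (Ne.symm (Finset.ne_of_mem_erase hk))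
  -- right side
  have hRb : δ ^ b * (b ! : ℝ) ≤ ∏ k ∈ R, |x j - x k| := by
    have := side_prod R (fun k => x k - x j) δ hδ
      (fun k hk => by
        have h1 := hsepj k (Finset.mem_of_mem_filter k hk)
        have h2 := (Finset.mem_filter.mp hk).2
        rw [abs_of_nonpos (by linarith)] at h1
        show δ ≤ x k - x j
        linarith)
      (fun i hi i' hi' hne => by
        have := hsep i i' (by simpa using hne)
        simpa using this)
    refine le_trans this (le_of_eq ?_)
    apply Finset.prod_congr rfl
    intro k hk
    have h2 := (Finset.mem_filter.mp hk).2
    rw [abs_of_nonpos (by linarith)]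
    ring
  -- left side
  have hLa : δ ^ a * (a ! : ℝ) ≤ ∏ k ∈ L, |x j - x k| := by
    have := side_prod L (fun k => x j - x k) δ hδ
      (fun k hk => by
        have h1 := hsepj k (Finset.mem_of_mem_filter k hk)
        have h2 := (Finset.mem_filter.mp hk).2
        push_neg at h2
        rw [abs_of_nonneg (by linarith)] at h1
        show δ ≤ x j - x k
        linarith)
      (fun i hi i' hi' hne => by
        have := hsep i i' (by simpa using hne)
        show δ ≤ |x j - x i - (x j - x i')|
        rw [show x j - x i - (x j - x i') = -(x i - x i') by ring, abs_neg]
        exact this)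
    refine le_trans this (le_of_eq ?_)
    apply Finset.prod_congr rfl
    intro k hk
    have h2 := (Finset.mem_filter.mp hk).2
    push_neg at h2
    rw [abs_of_nonneg (by linarith)]
  have hsplit : ∏ k ∈ S, |x j - x k| = (∏ k ∈ R, |x j - x k|) * ∏ k ∈ L, |x j - x k| := by
    rw [hR, hL, Finset.prod_filter_mul_prod_filter_not]
  have hPpos : 0 < ∏ k ∈ S, |x j - x k| := by
    apply Finset.prod_pos
    intro k hk
    exact lt_of_lt_of_le hδ (hsepj k hk)
  have hmain : δ ^ d * ((a ! : ℝ) * (b ! : ℝ)) ≤ ∏ k ∈ S, |x j - x k| := by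
    have hpow : δ ^ d = δ ^ a * δ ^ b := by rw [← pow_add, hab]
    rw [hsplit, hpow]
    have h1 : (0:ℝ) ≤ δ ^ a * (a ! : ℝ) := by positivity
    have h2 : (0:ℝ) ≤ δ ^ b * (b ! : ℝ) := by positivity
    calc δ ^ a * δ ^ b * ((a ! : ℝ) * (b ! : ℝ)) = (δ ^ b * (b ! : ℝ)) * (δ ^ a * (a ! : ℝ)) := by ring
      _ ≤ (∏ k ∈ R, |x j - x k|) * ∏ k ∈ L, |x j - x k| :=
        mul_le_mul hRb hLa h1 (le_trans h2 hRb)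
  -- key numeric fact: d^d ≤ exp(2d) * a! * b!
  have hnum : (d:ℝ) ^ d ≤ Real.exp (2 * d) * ((a ! : ℝ) * (b ! : ℝ)) := by
    have h1 : (d:ℝ) ^ d ≤ Real.exp d * (d ! : ℝ) := by
      have := Real.pow_div_factorial_le_exp (x := (d:ℝ)) (by positivity) d
      have hf : (0:ℝ) < (d ! : ℝ) := by positivity
      rw [div_le_iff₀ hf] at this
      linarith
    have hchoose : (d.choose b : ℝ) ≤ 2 ^ d := by
      have : d.choose b ≤ 2 ^ d := by
        rw [← Nat.sum_range_choose d]
        rcases le_or_gt b d with h | h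
        · exact Finset.single_le_sum (f := fun m => d.choose m) (fun i _ => Nat.zero_le _)
            (Finset.mem_range.mpr (by omega))
        · rw [Nat.choose_eq_zero_of_lt h]; exact Nat.zero_le _
      exact_mod_cast this
    have hfact : ((d)! : ℝ) = (d.choose b : ℝ) * (a ! : ℝ) * (b ! : ℝ) := by
      have ha' : (a + b).choose b * (a)! * (b)! = (a+b)! :=
        Nat.add_choose_mul_factorial_mul_factorial a b
      rw [hab] at ha'
      exact_mod_cast ha'.symm
    have h2e : (2:ℝ) ^ d ≤ Real.exp d := by
      calc (2:ℝ) ^ d ≤ Real.exp 1 ^ d := by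
            apply pow_le_pow_left₀ (by norm_num)
            linarith [Real.add_one_le_exp (1:ℝ)]
        _ = Real.exp d := by rw [← Real.exp_one_rpow d]; rw [Real.rpow_natCast]
      
    calc (d:ℝ) ^ d ≤ Real.exp d * (d ! : ℝ) := h1
      _ = Real.exp d * ((d.choose b : ℝ) * (a ! : ℝ) * (b ! : ℝ)) := by rw [hfact]
      _ ≤ Real.exp d * (Real.exp d * (a ! : ℝ) * (b ! : ℝ)) := by
          apply mul_le_mul_of_nonneg_left _ (Real.exp_pos _).le
          have : (d.choose b : ℝ) ≤ Real.exp d := hchoose.trans h2e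
          have hfa : (0:ℝ) ≤ (a ! : ℝ) := by positivity
          have hfb : (0:ℝ) ≤ (b ! : ℝ) := by positivity
          apply mul_le_mul_of_nonneg_right _ hfb
          exact mul_le_mul_of_nonneg_right this hfa
      _ = Real.exp (2 * d) * ((a ! : ℝ) * (b ! : ℝ)) := by
          rw [two_mul, Real.exp_add]; ring
  -- finish
  rw [Finset.prod_inv_distrib]
  have hδd' : (0:ℝ) < δ * d := by
    have : (0:ℝ) < d := by exact_mod_cast hd
    positivity
  rw [inv_pow]
  rw [← hS] at *
  have hQpos : (0:ℝ) < δ ^ d * ((a ! : ℝ) * (b ! : ℝ)) := by positivity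
  -- (∏)⁻¹ ≤ (δ^d a! b!)⁻¹ ≤ exp(2d) ((δd)^d)⁻¹
  have step1 : (∏ k ∈ S, |x j - x k|)⁻¹ ≤ (δ ^ d * ((a ! : ℝ) * (b ! : ℝ)))⁻¹ :=
    inv_anti₀ hQpos hmain
  refine step1.trans ?_
  have h3 : (δ * (d:ℝ)) ^ d / Real.exp (2 * d) ≤ δ ^ d * ((a ! : ℝ) * (b ! : ℝ)) := by
    rw [div_le_iff₀ (Real.exp_pos _), mul_pow]
    have hδp : (0:ℝ) ≤ δ ^ d := by positivity
    calc δ ^ d * (d:ℝ) ^ d ≤ δ ^ d * (Real.exp (2 * d) * ((a ! : ℝ) * (b ! : ℝ))) :=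
          mul_le_mul_of_nonneg_left hnum hδp
      _ = δ ^ d * ((a ! : ℝ) * (b ! : ℝ)) * Real.exp (2 * d) := by ring
  calc (δ ^ d * ((a ! : ℝ) * (b ! : ℝ)))⁻¹ ≤ ((δ * (d:ℝ)) ^ d / Real.exp (2 * d))⁻¹ :=
        inv_anti₀ (by positivity) h3
    _ = Real.exp (2 * d) * ((δ * (d:ℝ)) ^ d)⁻¹ := by
        rw [inv_div, div_eq_mul_inv]
end

section
/- Let $p$ and $q$ be real polynomials of degree at most $d$, and let $S \subset [0,1]$ be a $\delta$-separated set with $|S| = 2d+1$. Assume $p(x) \neq 0$ for all $x \in S$. Then $|p(1)^2 - q(1)^2| \leq E|p(1)| + E^2$, where $E = (e^2 (d\delta)^{-1})^d \max_{x \in S} |p(x)^2 - q(x)^2| / |p(x)|$. -/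
open Real Polynomial Finset

lemma sep_span (δ : ℝ) (hδ : 0 < δ) (U : Finset ℝ)
    (hsep : ∀ x ∈ U, ∀ y ∈ U, x ≠ y → δ ≤ |x - y|)
    (lo hi : ℝ) (hmem : ∀ x ∈ U, lo ≤ x ∧ x ≤ hi) (hne : U.Nonempty) :
    ((U.card : ℝ) - 1) * δ ≤ hi - lo := by
  induction U using Finset.strongInduction generalizing hi with
  | _ U ih =>
    obtain ⟨x0, hx0⟩ := hne
    rcases le_or_gt U.card 1 with h1 | h1
    · have h2 : (U.card : ℝ) ≤ 1 := by exact_mod_cast h1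
      have h3 := hmem x0 hx0
      nlinarith
    · set m := U.max' ⟨x0, hx0⟩ with hm
      have hmU : m ∈ U := U.max'_mem _
      have hcard : (U.erase m).card = U.card - 1 := Finset.card_erase_of_mem hmU
      have hne' : (U.erase m).Nonempty := by
        rw [← Finset.card_pos, hcard]; omega
      have hsub : U.erase m ⊂ U := Finset.erase_ssubset hmU
      have hmem' : ∀ x ∈ U.erase m, lo ≤ x ∧ x ≤ m - δ := by
        intro x hx
        have hxU := Finset.mem_of_mem_erase hx
        have hxm : x ≠ m := Finset.ne_of_mem_erase hx
        have h1 := hsep x hxU m hmU hxm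
        have h2 : x ≤ m := U.le_max' x hxU
        have h3 : |x - m| = m - x := by rw [abs_sub_comm]; exact abs_of_nonneg (by linarith)
        exact ⟨(hmem x hxU).1, by rw [h3] at h1; linarith⟩
      have key := ih (U.erase m) hsub
        (fun x hx y hy => hsep x (Finset.mem_of_mem_erase hx) y (Finset.mem_of_mem_erase hy))
        (m - δ) hmem' hne'
      have hmhi : m ≤ hi := (hmem m hmU).2
      have hcast : (((U.erase m).card : ℝ)) = (U.card : ℝ) - 1 := by
        rw [hcard]; have : 1 ≤ U.card := by omega
        push_cast [Nat.cast_sub this]; ring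
      rw [hcast] at key
      linarith

lemma prod_side (δ : ℝ) (hδ : 0 < δ) (x : ℝ) (B : Finset ℝ) (hB : ∀ y ∈ B, y < x)
    (hsep : ∀ a ∈ insert x B, ∀ b ∈ insert x B, a ≠ b → δ ≤ |a - b|) :
    (B.card.factorial : ℝ) * δ ^ B.card ≤ ∏ y ∈ B, (x - y) := by
  classical
  set f : ℝ → ℕ := fun y => (B.filter (fun z => y ≤ z)).card with hf
  have hxB : x ∉ B := fun hx => lt_irrefl x (hB x hx)
  have step1 : ∀ y ∈ B, (f y : ℝ) * δ ≤ x - y := by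
    intro y hy
    set V : Finset ℝ := insert x (B.filter (fun z => y ≤ z)) with hV
    have hxV : x ∉ B.filter (fun z => y ≤ z) := fun h => hxB (Finset.mem_of_mem_filter x h)
    have hcardV : V.card = f y + 1 := by
      rw [hV, Finset.card_insert_of_notMem hxV]
    have hmemV : ∀ z ∈ V, y ≤ z ∧ z ≤ x := by
      intro z hz
      rcases Finset.mem_insert.mp hz with rfl | hz
      · exact ⟨le_of_lt (hB y hy), le_refl _⟩
      · exact ⟨(Finset.mem_filter.mp hz).2, le_of_lt (hB z (Finset.mem_of_mem_filter z hz))⟩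
    have hsepV : ∀ a ∈ V, ∀ b ∈ V, a ≠ b → δ ≤ |a - b| := by
      intro a ha b hb
      have hsub : V ⊆ insert x B := by
        intro z hz
        rcases Finset.mem_insert.mp hz with rfl | hz
        · exact Finset.mem_insert_self _ _
        · exact Finset.mem_insert_of_mem (Finset.mem_of_mem_filter z hz)
      exact hsep a (hsub ha) b (hsub hb)
    have := sep_span δ hδ V hsepV y x hmemV ⟨x, Finset.mem_insert_self _ _⟩
    rw [hcardV] at this
    push_cast at this
    linarith
  have hinj : Set.InjOn f B := by
    have hmono : ∀ y ∈ B, ∀ y' ∈ B, y < y' → f y' < f y := by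
      intro y hy y' hy' hlt
      apply Finset.card_lt_card
      constructor
      · intro z hz
        have := Finset.mem_filter.mp hz
        exact Finset.mem_filter.mpr ⟨this.1, le_trans (le_of_lt hlt) this.2⟩
      · intro hcon
        have : y ∈ B.filter (fun z => y' ≤ z) := hcon (Finset.mem_filter.mpr ⟨hy, le_refl _⟩)
        exact absurd (Finset.mem_filter.mp this).2 (not_le.mpr hlt)
    intro y hy y' hy' heq
    by_contra hne
    rcases lt_or_gt_of_ne hne with h | h
    · exact absurd heq (Nat.ne_of_lt' (hmono y hy y' hy' h))
    · exact absurd heq (Nat.ne_of_gt (hmono y' hy' y hy h)).symm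
  have himg : B.image f = Finset.Icc 1 B.card := by
    apply Finset.eq_of_subset_of_card_le
    · intro i hi
      obtain ⟨y, hy, rfl⟩ := Finset.mem_image.mp hi
      refine Finset.mem_Icc.mpr ⟨?_, Finset.card_le_card (Finset.filter_subset _ _)⟩
      exact Finset.card_pos.mpr ⟨y, Finset.mem_filter.mpr ⟨hy, le_refl _⟩⟩
    · rw [Finset.card_image_of_injOn hinj, Nat.card_Icc]; omega
  have hprodf : ∏ y ∈ B, (f y : ℝ) = (B.card.factorial : ℝ) := by
    have : ∏ y ∈ B, f y = B.card.factorial := by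
      rw [← Finset.prod_Ico_id_eq_factorial, Finset.Ico_add_one_right_eq_Icc, ← himg, Finset.prod_image hinj]
    exact_mod_cast congrArg (Nat.cast : ℕ → ℝ) this
  calc (B.card.factorial : ℝ) * δ ^ B.card = ∏ y ∈ B, ((f y : ℝ) * δ) := by
        rw [Finset.prod_mul_distrib, hprodf, Finset.prod_const, Finset.card_def]
    _ ≤ ∏ y ∈ B, (x - y) := by
        apply Finset.prod_le_prod
        · intro y hy; positivity
        · exact step1

lemma prod_side' (δ : ℝ) (hδ : 0 < δ) (x : ℝ) (A : Finset ℝ) (hA : ∀ y ∈ A, x < y)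
    (hsep : ∀ a ∈ insert x A, ∀ b ∈ insert x A, a ≠ b → δ ≤ |a - b|) :
    (A.card.factorial : ℝ) * δ ^ A.card ≤ ∏ y ∈ A, (y - x) := by
  classical
  have hinj : Function.Injective (fun y : ℝ => -y) := fun a b h => by simpa using h
  set B := A.image (fun y => -y) with hB
  have hcard : B.card = A.card := Finset.card_image_of_injective _ hinj
  have h1 : ∀ y ∈ B, y < -x := by
    intro y hy
    obtain ⟨z, hz, rfl⟩ := Finset.mem_image.mp hy
    simpa using hA z hz
  have h2 : ∀ a ∈ insert (-x) B, ∀ b ∈ insert (-x) B, a ≠ b → δ ≤ |a - b| := by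
    have himg : insert (-x) B = (insert x A).image (fun y => -y) := by
      rw [Finset.image_insert]
    intro a ha b hb hab
    rw [himg] at ha hb
    obtain ⟨a', ha', rfl⟩ := Finset.mem_image.mp ha
    obtain ⟨b', hb', rfl⟩ := Finset.mem_image.mp hb
    have : a' ≠ b' := fun h => hab (by rw [h])
    have := hsep a' ha' b' hb' this
    calc δ ≤ |a' - b'| := this
      _ = |(-a') - (-b')| := by rw [← abs_neg]; ring_nf
  have key := prod_side δ hδ (-x) B h1 h2
  rw [hcard] at key
  have : ∏ y ∈ B, (-x - y) = ∏ y ∈ A, (y - x) := by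
    rw [hB, Finset.prod_image (fun a _ b _ h => hinj h)]
    exact Finset.prod_congr rfl (fun y _ => by ring)
  linarith [this ▸ key]

lemma prod_dist (δ : ℝ) (hδ : 0 < δ) (d : ℕ) (T : Finset ℝ) (hT : T.card = d + 1)
    (hsep : ∀ a ∈ T, ∀ b ∈ T, a ≠ b → δ ≤ |a - b|) (x : ℝ) (hx : x ∈ T) :
    ((d / 2).factorial : ℝ) * ((d - d / 2).factorial : ℝ) * δ ^ d ≤ ∏ y ∈ T.erase x, |x - y| := by
  classical
  set B := T.filter (fun y => y < x) with hB
  set A := T.filter (fun y => x < y) with hA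
  have hdisj : Disjoint B A := by
    rw [Finset.disjoint_left]
    intro y hy hy'
    exact absurd ((Finset.mem_filter.mp hy').2) (not_lt.mpr (le_of_lt (Finset.mem_filter.mp hy).2))
  have hunion : T.erase x = B ∪ A := by
    ext y
    simp only [Finset.mem_erase, Finset.mem_union, hB, hA, Finset.mem_filter]
    constructor
    · rintro ⟨hne, hyT⟩
      rcases lt_or_gt_of_ne hne with h | h
      · exact Or.inl ⟨hyT, h⟩
      · exact Or.inr ⟨hyT, h⟩
    · rintro (⟨hyT, h⟩ | ⟨hyT, h⟩)
      · exact ⟨ne_of_lt h, hyT⟩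
      · exact ⟨ne_of_gt h, hyT⟩
  have hcardBA : B.card + A.card = d := by
    have := Finset.card_union_of_disjoint hdisj
    rw [← hunion, Finset.card_erase_of_mem hx, hT] at this
    omega
  have hsepB : ∀ a ∈ insert x B, ∀ b ∈ insert x B, a ≠ b → δ ≤ |a - b| := by
    intro a ha b hb hab
    have hsub : insert x B ⊆ T := Finset.insert_subset hx (Finset.filter_subset _ _)
    exact hsep a (hsub ha) b (hsub hb) hab
  have hsepA : ∀ a ∈ insert x A, ∀ b ∈ insert x A, a ≠ b → δ ≤ |a - b| := by
    intro a ha b hb hab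
    have hsub : insert x A ⊆ T := Finset.insert_subset hx (Finset.filter_subset _ _)
    exact hsep a (hsub ha) b (hsub hb) hab
  have keyB := prod_side δ hδ x B (fun y hy => (Finset.mem_filter.mp hy).2) hsepB
  have keyA := prod_side' δ hδ x A (fun y hy => (Finset.mem_filter.mp hy).2) hsepA
  have hsplit : ∏ y ∈ T.erase x, |x - y| = (∏ y ∈ B, (x - y)) * ∏ y ∈ A, (y - x) := by
    rw [hunion, Finset.prod_union hdisj]
    congr 1
    · exact Finset.prod_congr rfl (fun y hy => abs_of_pos (by linarith [(Finset.mem_filter.mp hy).2]))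
    · exact Finset.prod_congr rfl (fun y hy => by
        rw [abs_sub_comm]; exact abs_of_pos (by linarith [(Finset.mem_filter.mp hy).2]))
  -- factorial bound: (d/2)! * (d - d/2)! ≤ a! * b!
  have hfact : (d / 2).factorial * (d - d / 2).factorial ≤ B.card.factorial * A.card.factorial := by
    have h1 : B.card ≤ d := by omega
    have h2 : A.card = d - B.card := by omega
    have hch : d.choose B.card ≤ d.choose (d / 2) := Nat.choose_le_middle _ _
    have e1 : d.choose B.card * (B.card.factorial * (d - B.card).factorial) = d.factorial := by
      rw [← mul_assoc]; exact Nat.choose_mul_factorial_mul_factorial h1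
    have e2 : d.choose (d / 2) * ((d / 2).factorial * (d - d / 2).factorial) = d.factorial := by
      rw [← mul_assoc]; exact Nat.choose_mul_factorial_mul_factorial (Nat.div_le_self _ _)
    have hpos : 0 < d.choose (d / 2) := Nat.choose_pos (Nat.div_le_self _ _)
    have step : d.choose (d / 2) * ((d / 2).factorial * (d - d / 2).factorial)
        ≤ d.choose (d / 2) * (B.card.factorial * (d - B.card).factorial) := by
      rw [e2, ← e1]
      exact Nat.mul_le_mul_right _ hch
    rw [h2]
    exact Nat.le_of_mul_le_mul_left step hpos
  rw [hsplit]
  calc ((d / 2).factorial : ℝ) * ((d - d / 2).factorial : ℝ) * δ ^ d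
      ≤ (B.card.factorial : ℝ) * (A.card.factorial : ℝ) * δ ^ d := by
        have : ((d / 2).factorial * (d - d / 2).factorial : ℝ) ≤ (B.card.factorial * A.card.factorial : ℝ) := by exact_mod_cast hfact
        have hδd : (0:ℝ) < δ ^ d := by positivity
        nlinarith
    _ = ((B.card.factorial : ℝ) * δ ^ B.card) * ((A.card.factorial : ℝ) * δ ^ A.card) := by
        rw [← hcardBA, pow_add]; ring
    _ ≤ (∏ y ∈ B, (x - y)) * ∏ y ∈ A, (y - x) := by
        apply mul_le_mul keyB keyA (by positivity) (le_trans (by positivity) keyB)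

lemma pow_le_exp_factorial (n : ℕ) (hn : 1 ≤ n) :
    (n : ℝ) ^ n ≤ Real.exp ((n : ℝ) - 1) * (n.factorial : ℝ) := by
  induction n with
  | zero => omega
  | succ m ih =>
    rcases Nat.eq_or_lt_of_le hn with h | h
    · simp [← h]
    · have hm : 1 ≤ m := by omega
      have ihm := ih hm
      have hmpos : (0:ℝ) < m := by exact_mod_cast hm
      have key : ((m:ℝ) + 1) ^ m ≤ Real.exp 1 * (m:ℝ) ^ m := by
        have h1 : (1 : ℝ) + 1 / m ≤ Real.exp (1 / m) := by
          have := Real.add_one_le_exp (1 / (m:ℝ))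
          linarith
        have h2 : ((1 : ℝ) + 1 / m) ^ m ≤ Real.exp (1 / m) ^ m :=
          pow_le_pow_left₀ (by positivity) h1 m
        have h3 : Real.exp (1 / (m:ℝ)) ^ m = Real.exp 1 := by
          rw [← Real.exp_nat_mul]
          congr 1
          field_simp
        have h4 : ((m:ℝ) + 1) ^ m = ((1 : ℝ) + 1 / m) ^ m * (m:ℝ) ^ m := by
          rw [← mul_pow]
          congr 1
          field_simp
        rw [h4]
        apply mul_le_mul_of_nonneg_right _ (by positivity)
        rw [← h3]
        exact h2
      push_cast
      have e1 : ((m:ℝ) + 1) ^ (m + 1) = ((m:ℝ) + 1) * ((m:ℝ) + 1) ^ m := by ring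
      rw [e1]
      have e2 : Real.exp ((m:ℝ) + 1 - 1) * (((m+1).factorial : ℕ) : ℝ)
          = ((m:ℝ) + 1) * (Real.exp 1 * (Real.exp ((m:ℝ) - 1) * (m.factorial : ℝ))) := by
        rw [Nat.factorial_succ]
        push_cast
        rw [show (m:ℝ) + 1 - 1 = 1 + ((m:ℝ) - 1) by ring, Real.exp_add]
        ring
      rw [e2]
      have step : ((m:ℝ) + 1) ^ m ≤ Real.exp 1 * (Real.exp ((m:ℝ) - 1) * (m.factorial : ℝ)) :=
        le_trans key (mul_le_mul_of_nonneg_left ihm (le_of_lt (Real.exp_pos 1)))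
      exact mul_le_mul_of_nonneg_left step (by positivity)

lemma claimA (d : ℕ) (hd : 2 ≤ d) :
    (d : ℝ) ^ d ≤ 2 ^ d * ((d / 2 : ℕ) : ℝ) ^ (d / 2) * ((d - d / 2 : ℕ) : ℝ) ^ (d - d / 2) := by
  rcases Nat.even_or_odd d with ⟨h, rfl⟩ | ⟨h, rfl⟩
  · have h3 : h + h - (h + h) / 2 = h := by omega
    have h2 : (h + h) / 2 = h := by omega
    rw [h3, h2]
    have e : ((h + h : ℕ):ℝ) ^ (h + h) = 2 ^ (h + h) * (h:ℝ) ^ h * (h:ℝ) ^ h := by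
      push_cast
      rw [show (h:ℝ) + (h:ℝ) = 2 * (h:ℝ) by ring, mul_pow]
      ring
    rw [e]
  · have hh : 1 ≤ h := by omega
    have h3 : 2 * h + 1 - (2 * h + 1) / 2 = h + 1 := by omega
    have h2 : (2 * h + 1) / 2 = h := by omega
    rw [h3, h2]
    set n : ℝ := 2 * (h:ℝ) + 1 with hn
    have hcast : ((2 * h + 1 : ℕ) : ℝ) = n := by push_cast; ring
    rw [hcast]
    have hh' : (1:ℝ) ≤ (h:ℝ) := by exact_mod_cast hh
    have hnpos : (1:ℝ) < n := by rw [hn]; linarith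
    have hn2 : (0:ℝ) < n ^ 2 := by positivity
    have hfrac : (0:ℝ) ≤ 1 - (h:ℝ) / n ^ 2 := by
      rw [sub_nonneg, div_le_one hn2, hn]
      nlinarith
    have hber : (1:ℝ) - (h:ℝ) / n ^ 2 ≤ (1 - 1 / n ^ 2) ^ h := by
      have hb1 : 1 / n ^ 2 ≤ 1 := by rw [div_le_one hn2]; nlinarith
      have hb := one_add_mul_le_pow (a := -(1 / n ^ 2)) (by linarith) h
      calc (1:ℝ) - (h:ℝ) / n ^ 2 = 1 + (h:ℝ) * (-(1 / n ^ 2)) := by ring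
        _ ≤ (1 + -(1 / n ^ 2)) ^ h := hb
        _ = (1 - 1 / n ^ 2) ^ h := by ring_nf
    have key2 : n ≤ (1 - (h:ℝ) / n ^ 2) * (n + 1) := by
      rw [show (1 - (h:ℝ) / n ^ 2) = (n ^ 2 - h) / n ^ 2 by field_simp, div_mul_eq_mul_div,
        le_div_iff₀ hn2, hn]
      nlinarith
    have hfac : (2:ℝ) ^ (2 * h + 1) * (h:ℝ) ^ h * ((h:ℝ) + 1) ^ (h + 1)
        = (n ^ 2 - 1) ^ h * (n + 1) := by
      have e1 : n ^ 2 - 1 = (2 * (h:ℝ)) * (2 * (h:ℝ) + 2) := by rw [hn]; ring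
      have e2 : n + 1 = 2 * (h:ℝ) + 2 := by rw [hn]; ring
      rw [e1, e2, mul_pow,
        show (2 * (h:ℝ)) ^ h = 2 ^ h * (h:ℝ) ^ h from mul_pow 2 _ h,
        show (2 * (h:ℝ) + 2) ^ h = 2 ^ h * ((h:ℝ) + 1) ^ h by
          rw [show 2 * (h:ℝ) + 2 = 2 * ((h:ℝ) + 1) by ring, mul_pow]]
      ring
    have main : n ^ (2 * h + 1) ≤ (n ^ 2 - 1) ^ h * (n + 1) := by
      calc n ^ (2 * h + 1) = n ^ (2 * h) * n := by rw [pow_succ]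
        _ ≤ n ^ (2 * h) * ((1 - (h:ℝ) / n ^ 2) * (n + 1)) :=
            mul_le_mul_of_nonneg_left key2 (by positivity)
        _ ≤ n ^ (2 * h) * ((1 - 1 / n ^ 2) ^ h * (n + 1)) := by
            apply mul_le_mul_of_nonneg_left _ (by positivity)
            exact mul_le_mul_of_nonneg_right hber (by linarith)
        _ = (n ^ 2) ^ h * (1 - 1 / n ^ 2) ^ h * (n + 1) := by rw [← pow_mul]; ring
        _ = (n ^ 2 - 1) ^ h * (n + 1) := by
            rw [← mul_pow]
            congr 2
            field_simp
    push_cast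
    calc n ^ (2 * h + 1) ≤ (n ^ 2 - 1) ^ h * (n + 1) := main
      _ = (2:ℝ) ^ (2 * h + 1) * (h:ℝ) ^ h * ((h:ℝ) + 1) ^ (h + 1) := hfac.symm

lemma claimB (d : ℕ) :
    2 * ((d:ℝ) + 1) * 2 ^ d ≤ Real.exp ((d:ℝ) + 2) := by
  have he : (2.7182818283 : ℝ) < Real.exp 1 := Real.exp_one_gt_d9
  have hexp2 : Real.exp ((d:ℝ) + 2) = Real.exp 1 ^ 2 * Real.exp 1 ^ d := by
    rw [← Real.exp_nat_mul, ← Real.exp_nat_mul, ← Real.exp_add]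
    push_cast
    ring_nf
  have hber : (1:ℝ) + d * (Real.exp 1 / 2 - 1) ≤ (Real.exp 1 / 2) ^ d := by
    have := one_add_mul_le_pow (a := Real.exp 1 / 2 - 1) (by nlinarith) d
    calc (1:ℝ) + d * (Real.exp 1 / 2 - 1) ≤ (1 + (Real.exp 1 / 2 - 1)) ^ d := this
      _ = (Real.exp 1 / 2) ^ d := by ring_nf
  have hpow : Real.exp 1 ^ d = 2 ^ d * (Real.exp 1 / 2) ^ d := by
    rw [← mul_pow]
    congr 1
    ring
  rw [hexp2, hpow]
  have h1 : (2:ℝ) ^ d * (1 + d * (Real.exp 1 / 2 - 1)) ≤ 2 ^ d * (Real.exp 1 / 2) ^ d :=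
    mul_le_mul_of_nonneg_left hber (by positivity)
  have hd0 : (0:ℝ) ≤ d := Nat.cast_nonneg d
  have h2 : 2 * ((d:ℝ) + 1) ≤ Real.exp 1 ^ 2 * (1 + d * (Real.exp 1 / 2 - 1)) := by
    have h3 : (7:ℝ) ≤ Real.exp 1 ^ 2 := by nlinarith
    have h4 : (1/3:ℝ) ≤ Real.exp 1 / 2 - 1 := by nlinarith
    have h5 : 1 + (d:ℝ)/3 ≤ 1 + d * (Real.exp 1 / 2 - 1) := by nlinarith
    have h6 : 7 * (1 + (d:ℝ)/3) ≤ Real.exp 1 ^ 2 * (1 + d * (Real.exp 1 / 2 - 1)) :=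
      mul_le_mul h3 h5 (by linarith) (by linarith)
    linarith
  calc 2 * ((d:ℝ) + 1) * 2 ^ d ≤ Real.exp 1 ^ 2 * (1 + d * (Real.exp 1 / 2 - 1)) * 2 ^ d :=
        mul_le_mul_of_nonneg_right h2 (by positivity)
    _ ≤ Real.exp 1 ^ 2 * (2 ^ d * (Real.exp 1 / 2) ^ d) := by nlinarith [h1, sq_nonneg (Real.exp 1)]

lemma numeric (d : ℕ) (hd : 1 ≤ d) :
    2 * ((d:ℝ) + 1) * (d:ℝ) ^ d ≤
      Real.exp (2 * (d:ℝ)) * (((d / 2).factorial : ℝ) * ((d - d / 2).factorial : ℝ)) := by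
  have he : (2.7182818283 : ℝ) < Real.exp 1 := Real.exp_one_gt_d9
  rcases Nat.eq_or_lt_of_le hd with h | h
  · subst h
    norm_num
    have : Real.exp (2:ℝ) = Real.exp 1 * Real.exp 1 := by rw [← Real.exp_add]; norm_num
    nlinarith
  · have hd2 : 2 ≤ d := h
    set h1 : ℕ := d / 2 with hh1
    set k1 : ℕ := d - d / 2 with hk1
    have hhk : h1 + k1 = d := by omega
    have hh1' : 1 ≤ h1 := by omega
    have hk1' : 1 ≤ k1 := by omega
    have f1 := pow_le_exp_factorial h1 hh1'
    have f2 := pow_le_exp_factorial k1 hk1'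
    have f3 := claimA d hd2
    have f4 := claimB d
    have hcast : (h1:ℝ) + (k1:ℝ) = (d:ℝ) := by exact_mod_cast congrArg (Nat.cast : ℕ → ℝ) hhk
    have hhk0 : (0:ℝ) ≤ (h1:ℝ) ^ h1 * (k1:ℝ) ^ k1 := by positivity
    calc 2 * ((d:ℝ) + 1) * (d:ℝ) ^ d
        ≤ 2 * ((d:ℝ) + 1) * (2 ^ d * (h1:ℝ) ^ h1 * (k1:ℝ) ^ k1) := by
          apply mul_le_mul_of_nonneg_left _ (by positivity)
          rw [hh1, hk1] at *
          exact f3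
      _ = (2 * ((d:ℝ) + 1) * 2 ^ d) * ((h1:ℝ) ^ h1 * (k1:ℝ) ^ k1) := by ring
      _ ≤ Real.exp ((d:ℝ) + 2) * ((h1:ℝ) ^ h1 * (k1:ℝ) ^ k1) :=
          mul_le_mul_of_nonneg_right f4 hhk0
      _ ≤ Real.exp ((d:ℝ) + 2) *
            ((Real.exp ((h1:ℝ) - 1) * (h1.factorial : ℝ)) *
              (Real.exp ((k1:ℝ) - 1) * (k1.factorial : ℝ))) := by
          apply mul_le_mul_of_nonneg_left _ (le_of_lt (Real.exp_pos _))
          exact mul_le_mul f1 f2 (by positivity) (by positivity)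
      _ = Real.exp (2 * (d:ℝ)) * ((h1.factorial : ℝ) * (k1.factorial : ℝ)) := by
          rw [show Real.exp ((d:ℝ) + 2) * ((Real.exp ((h1:ℝ) - 1) * (h1.factorial : ℝ)) *
              (Real.exp ((k1:ℝ) - 1) * (k1.factorial : ℝ)))
            = (Real.exp ((d:ℝ) + 2) * Real.exp ((h1:ℝ) - 1) * Real.exp ((k1:ℝ) - 1)) *
              ((h1.factorial : ℝ) * (k1.factorial : ℝ)) by ring,
            ← Real.exp_add, ← Real.exp_add]
          congr 2
          linarith

lemma bound_const (d : ℕ) (hd : 1 ≤ d) (δ : ℝ) (hδ : 0 < δ) :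
    ((d:ℝ) + 1) * ((((d / 2).factorial : ℝ) * ((d - d / 2).factorial : ℝ)) * δ ^ d)⁻¹ ≤
      1 / 2 * (Real.exp 2 * ((d : ℝ) * δ)⁻¹) ^ d := by
  have hdpos : (0:ℝ) < (d:ℝ) := by exact_mod_cast hd
  have hG : (0:ℝ) < (d:ℝ) ^ d := by positivity
  have hδd : (0:ℝ) < δ ^ d := by positivity
  have hFpos : (0:ℝ) < (((d / 2).factorial : ℝ) * ((d - d / 2).factorial : ℝ)) := by
    have := Nat.factorial_pos (d / 2)
    have := Nat.factorial_pos (d - d / 2)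
    positivity
  have hrw : (Real.exp 2 * ((d : ℝ) * δ)⁻¹) ^ d = Real.exp (2 * (d:ℝ)) * ((d:ℝ) ^ d * δ ^ d)⁻¹ := by
    rw [mul_pow, ← Real.exp_nat_mul, inv_pow, mul_pow,
      show ((d:ℕ):ℝ) * 2 = 2 * (d:ℝ) by ring]
  rw [hrw]
  set F : ℝ := (((d / 2).factorial : ℝ) * ((d - d / 2).factorial : ℝ)) with hF
  have key := numeric d hd
  rw [← hF] at key
  have h1 : ((d:ℝ) + 1) * (F * δ ^ d)⁻¹ = ((d:ℝ) + 1) / (F * δ ^ d) := by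
    rw [div_eq_mul_inv]
  have h2 : 1 / 2 * (Real.exp (2 * (d:ℝ)) * ((d:ℝ) ^ d * δ ^ d)⁻¹)
      = Real.exp (2 * (d:ℝ)) / (2 * ((d:ℝ) ^ d * δ ^ d)) := by
    rw [div_eq_mul_inv, mul_inv]
    ring
  rw [h1, h2, div_le_div_iff₀ (by positivity) (by positivity)]
  nlinarith [mul_le_mul_of_nonneg_right key (le_of_lt hδd)]

lemma extrapolate (d : ℕ) (δ : ℝ) (hδ : 0 < δ) (f : Polynomial ℝ) (hf : f.natDegree ≤ d)
    (T : Finset ℝ) (hT : T.card = d + 1)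
    (hmem : ∀ x ∈ T, x ∈ Set.Icc (0:ℝ) 1)
    (hsep : ∀ a ∈ T, ∀ b ∈ T, a ≠ b → δ ≤ |a - b|)
    (M : ℝ) (hM : ∀ x ∈ T, |f.eval x| ≤ M) :
    |f.eval 1| ≤ ((d:ℝ) + 1) * M *
      ((((d / 2).factorial : ℝ) * ((d - d / 2).factorial : ℝ)) * δ ^ d)⁻¹ := by
  classical
  have hTne : T.Nonempty := Finset.card_pos.mp (by omega)
  have hM0 : 0 ≤ M := le_trans (abs_nonneg _) (hM hTne.choose hTne.choose_spec)
  set F : ℝ := (((d / 2).factorial : ℝ) * ((d - d / 2).factorial : ℝ)) with hF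
  have hFpos : (0:ℝ) < F := by
    have := Nat.factorial_pos (d / 2)
    have := Nat.factorial_pos (d - d / 2)
    rw [hF]; positivity
  have hden : (0:ℝ) < F * δ ^ d := by positivity
  have hinj : Set.InjOn (id : ℝ → ℝ) T := fun a _ b _ h => h
  have hdeg : f.degree < (T.card : ℕ) := by
    rw [hT]
    rcases eq_or_ne f 0 with rfl | hf0
    · rw [Polynomial.degree_zero]
      exact_mod_cast WithBot.bot_lt_coe (d+1)
    · exact (Polynomial.natDegree_lt_iff_degree_lt hf0).mp (by omega)
  have hrepr := Lagrange.eq_interpolate (v := id) (f := f) hinj hdeg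
  have heval : f.eval 1 = ∑ i ∈ T, f.eval i * (Lagrange.basis T id i).eval 1 := by
    conv_lhs => rw [hrepr]
    rw [Lagrange.interpolate_apply, Polynomial.eval_finset_sum]
    exact Finset.sum_congr rfl (fun i _ => by rw [Polynomial.eval_mul, Polynomial.eval_C]; simp)
  have hbasis : ∀ i ∈ T, |(Lagrange.basis T id i).eval 1| ≤ (F * δ ^ d)⁻¹ := by
    intro i hi
    have hprod := prod_dist δ hδ d T hT hsep i hi
    have hprodpos : (0:ℝ) < ∏ j ∈ T.erase i, |i - j| := lt_of_lt_of_le hden hprod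
    have e1 : |(Lagrange.basis T id i).eval 1| = ∏ j ∈ T.erase i, (|1 - j| / |i - j|) := by
      rw [Lagrange.basis, Polynomial.eval_prod, Finset.abs_prod]
      refine Finset.prod_congr rfl (fun j hj => ?_)
      rw [Lagrange.basisDivisor, Polynomial.eval_mul, Polynomial.eval_C, Polynomial.eval_sub,
        Polynomial.eval_X, Polynomial.eval_C, abs_mul, abs_inv]
      simp only [id_eq]
      rw [div_eq_mul_inv, mul_comm]
    rw [e1]
    calc ∏ j ∈ T.erase i, (|1 - j| / |i - j|) ≤ ∏ j ∈ T.erase i, |i - j|⁻¹ := by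
          apply Finset.prod_le_prod (fun j _ => by positivity)
          intro j hj
          have hjT := Finset.mem_of_mem_erase hj
          have hij : i ≠ j := (Finset.ne_of_mem_erase hj).symm
          have habs : (0:ℝ) < |i - j| := abs_pos.mpr (sub_ne_zero.mpr hij)
          rw [div_eq_mul_inv, show |i - j|⁻¹ = 1 * |i - j|⁻¹ by ring]
          rw [show |1 - j| * (1 * |i - j|⁻¹) = |1 - j| * |i - j|⁻¹ by ring]
          apply mul_le_mul_of_nonneg_right _ (by positivity)
          obtain ⟨hj0, hj1⟩ := hmem j hjT
          rw [abs_of_nonneg (by linarith : (0:ℝ) ≤ 1 - j)]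
          linarith
      _ = (∏ j ∈ T.erase i, |i - j|)⁻¹ := by rw [Finset.prod_inv_distrib]
      _ ≤ (F * δ ^ d)⁻¹ := by
          apply inv_anti₀ hden hprod
  rw [heval]
  calc |∑ i ∈ T, f.eval i * (Lagrange.basis T id i).eval 1|
      ≤ ∑ i ∈ T, |f.eval i * (Lagrange.basis T id i).eval 1| := Finset.abs_sum_le_sum_abs _ _
    _ ≤ ∑ i ∈ T, M * (F * δ ^ d)⁻¹ := by
        apply Finset.sum_le_sum
        intro i hi
        rw [abs_mul]
        exact mul_le_mul (hM i hi) (hbasis i hi) (abs_nonneg _) hM0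
    _ = ((d:ℝ) + 1) * M * (F * δ ^ d)⁻¹ := by
        rw [Finset.sum_const, hT, nsmul_eq_mul]
        push_cast
        ring

lemma half_bound (E a b p1 : ℝ) (hE : 0 ≤ E) (ha : |a| ≤ E / 2) (hab : a + b = 2 * p1) :
    |a * b| ≤ E * |p1| + E ^ 2 := by
  have hb : |b| ≤ 2 * |p1| + E / 2 := by
    have hb' : b = 2 * p1 - a := by linarith
    rw [hb']
    calc |2 * p1 - a| ≤ |2 * p1| + |a| := abs_sub _ _
      _ ≤ 2 * |p1| + E / 2 := by rw [abs_mul]; simp; linarith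
  rw [abs_mul]
  calc |a| * |b| ≤ E / 2 * (2 * |p1| + E / 2) :=
        mul_le_mul ha hb (abs_nonneg _) (by linarith)
    _ = E * |p1| + E ^ 2 / 4 := by ring
    _ ≤ E * |p1| + E ^ 2 := by nlinarith

/-- The square method for extrapolation: with `E` the amplified maximum relative discrepancy on
a `δ`-separated set `S ⊆ [0,1]` of `2d+1` points, `|p(1)² - q(1)²| ≤ E|p(1)| + E²`. -/
theorem square_method_extrapolation
    (d : ℕ) (hd : 1 ≤ d) (δ : ℝ) (hδ : 0 < δ)
    (p q : Polynomial ℝ) (hp : p.natDegree ≤ d) (hq : q.natDegree ≤ d)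
    (S : Finset ℝ) (hSne : S.Nonempty) (hScard : S.card = 2 * d + 1)
    (hSmem : ∀ x ∈ S, x ∈ Set.Icc (0 : ℝ) 1)
    (hSsep : ∀ x ∈ S, ∀ y ∈ S, x ≠ y → δ ≤ |x - y|)
    (hpne : ∀ x ∈ S, p.eval x ≠ 0)
    (E : ℝ)
    (hE : E = (Real.exp 2 * ((d : ℝ) * δ)⁻¹) ^ d *
      S.sup' hSne (fun x => |p.eval x ^ 2 - q.eval x ^ 2| / |p.eval x|)) :
    |p.eval 1 ^ 2 - q.eval 1 ^ 2| ≤ E * |p.eval 1| + E ^ 2 := by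
  classical
  set M : ℝ := S.sup' hSne (fun x => |p.eval x ^ 2 - q.eval x ^ 2| / |p.eval x|) with hM
  set Kd : ℝ := (Real.exp 2 * ((d : ℝ) * δ)⁻¹) ^ d with hKd
  have hdpos : (0:ℝ) < (d:ℝ) := by exact_mod_cast hd
  have hKdpos : 0 < Kd := by rw [hKd]; positivity
  have hM0 : 0 ≤ M := by
    obtain ⟨x0, hx0⟩ := hSne
    exact le_trans (by positivity) (Finset.le_sup' _ hx0)
  have hE0 : 0 ≤ E := by rw [hE]; exact mul_nonneg (le_of_lt hKdpos) hM0
  have hMx : ∀ x ∈ S, |p.eval x ^ 2 - q.eval x ^ 2| ≤ M * |p.eval x| := by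
    intro x hx
    have h1 : |p.eval x ^ 2 - q.eval x ^ 2| / |p.eval x| ≤ M :=
      Finset.le_sup' (fun x => |p.eval x ^ 2 - q.eval x ^ 2| / |p.eval x|) hx
    have h2 : (0:ℝ) < |p.eval x| := abs_pos.mpr (hpne x hx)
    rw [div_le_iff₀ h2] at h1
    linarith
  have hmin : ∀ x ∈ S, min |(p - q).eval x| |(p + q).eval x| ≤ M := by
    intro x hx
    set u := |(p - q).eval x|
    set v := |(p + q).eval x|
    have hw : (0:ℝ) < |p.eval x| := abs_pos.mpr (hpne x hx)
    have huv : u * v = |p.eval x ^ 2 - q.eval x ^ 2| := by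
      rw [← abs_mul]
      congr 1
      simp [Polynomial.eval_sub, Polynomial.eval_add]
      ring
    have hwmax : |p.eval x| ≤ max u v := by
      have h2 : |(2:ℝ) * p.eval x| ≤ u + v := by
        calc |(2:ℝ) * p.eval x| = |(p - q).eval x + (p + q).eval x| := by
              congr 1
              simp [Polynomial.eval_sub, Polynomial.eval_add]
              ring
          _ ≤ u + v := abs_add_le _ _
      have h3 : u ≤ max u v := le_max_left _ _
      have h4 : v ≤ max u v := le_max_right _ _
      rw [abs_mul] at h2
      simp at h2
      linarith
    have hmm : min u v * max u v = u * v := min_mul_max u v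
    have hkey : min u v * |p.eval x| ≤ M * |p.eval x| := by
      calc min u v * |p.eval x| ≤ min u v * max u v := by
            apply mul_le_mul_of_nonneg_left hwmax (le_min (abs_nonneg _) (abs_nonneg _))
        _ = u * v := hmm
        _ = |p.eval x ^ 2 - q.eval x ^ 2| := huv
        _ ≤ M * |p.eval x| := hMx x hx
    exact le_of_mul_le_mul_right hkey hw
  -- pigeonhole
  set S1 : Finset ℝ := S.filter (fun x => |(p - q).eval x| ≤ M) with hS1
  set S2 : Finset ℝ := S.filter (fun x => ¬ |(p - q).eval x| ≤ M) with hS2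
  have hcards : S1.card + S2.card = 2 * d + 1 := by
    rw [hS1, hS2, Finset.card_filter_add_card_filter_not, hScard]
  have key : ∀ (f g : Polynomial ℝ), f.natDegree ≤ d → f + g = 2 • p →
      f.eval 1 * g.eval 1 = p.eval 1 ^ 2 - q.eval 1 ^ 2 →
      ∀ (T : Finset ℝ), T ⊆ S → T.card = d + 1 → (∀ x ∈ T, |f.eval x| ≤ M) →
      |p.eval 1 ^ 2 - q.eval 1 ^ 2| ≤ E * |p.eval 1| + E ^ 2 := by
    intro f g hfdeg hfg hprod1 T hTS hTcard hfM
    have hex := extrapolate d δ hδ f hfdeg T hTcard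
      (fun x hx => hSmem x (hTS hx))
      (fun a ha b hb hab => hSsep a (hTS ha) b (hTS hb) hab) M hfM
    have hbc := bound_const d hd δ hδ
    have hf1 : |f.eval 1| ≤ E / 2 := by
      have h1 : ((d:ℝ) + 1) * M *
          ((((d / 2).factorial : ℝ) * ((d - d / 2).factorial : ℝ)) * δ ^ d)⁻¹
          = (((d:ℝ) + 1) *
            ((((d / 2).factorial : ℝ) * ((d - d / 2).factorial : ℝ)) * δ ^ d)⁻¹) * M := by ring
      have h2 : (((d:ℝ) + 1) *
            ((((d / 2).factorial : ℝ) * ((d - d / 2).factorial : ℝ)) * δ ^ d)⁻¹) * M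
          ≤ (1 / 2 * Kd) * M := by
        apply mul_le_mul_of_nonneg_right _ hM0
        rw [hKd]
        exact hbc
      rw [hE]
      calc |f.eval 1| ≤ ((d:ℝ) + 1) * M *
            ((((d / 2).factorial : ℝ) * ((d - d / 2).factorial : ℝ)) * δ ^ d)⁻¹ := hex
        _ ≤ (1 / 2 * Kd) * M := by rw [h1]; exact h2
        _ = Kd * M / 2 := by ring
    have hab : f.eval 1 + g.eval 1 = 2 * p.eval 1 := by
      have := congrArg (Polynomial.eval 1) hfg
      simpa [Polynomial.eval_add, Polynomial.eval_smul] using this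
    rw [← hprod1]
    exact half_bound E (f.eval 1) (g.eval 1) (p.eval 1) hE0 hf1 hab
  rcases le_or_gt (d + 1) S1.card with hc | hc
  · obtain ⟨T, hTS1, hTcard⟩ := Finset.exists_subset_card_eq hc
    refine key (p - q) (p + q) ?_ (by rw [two_smul]; ring) ?_ T
      (hTS1.trans (Finset.filter_subset _ _)) hTcard ?_
    · exact le_trans (Polynomial.natDegree_sub_le p q) (max_le hp hq)
    · simp [Polynomial.eval_sub, Polynomial.eval_add]; ring
    · intro x hx
      exact (Finset.mem_filter.mp (hTS1 hx)).2
  · have hc2 : d + 1 ≤ S2.card := by omega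
    obtain ⟨T, hTS2, hTcard⟩ := Finset.exists_subset_card_eq hc2
    refine key (p + q) (p - q) ?_ (by rw [two_smul]; ring) ?_ T
      (hTS2.trans (Finset.filter_subset _ _)) hTcard ?_
    · exact le_trans (Polynomial.natDegree_add_le p q) (max_le hp hq)
    · simp [Polynomial.eval_sub, Polynomial.eval_add]; ring
    · intro x hx
      have hxS2 := hTS2 hx
      have hxS : x ∈ S := Finset.mem_of_mem_filter x hxS2
      have hnot : ¬ |(p - q).eval x| ≤ M := (Finset.mem_filter.mp hxS2).2
      have := hmin x hxS
      rcases min_cases |(p - q).eval x| |(p + q).eval x| with ⟨heq, _⟩ | ⟨heq, _⟩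
      · rw [heq] at this; exact absurd this hnot
      · rw [heq] at this; exact this
end

section
/- Let $D = \{(x_i, y_i)\}_{i=1}^M$ be data points with the $x_i$ evenly spaced on $[0, \Delta]$ and $2(d+1) < M < 100d$. Suppose $P_1$ and $P_2$ are real polynomials of degree at most $d$ each satisfying $\#\{j : |P_a(x_j) - y_j| \geq \delta\} < M/4$ for $a = 1, 2$. Then $|P_1(1) - P_2(1)| \leq (C \Delta^{-1})^d \delta$ for some absolute constant $C$. -/
/-!
Put `Q = P₁ - P₂`. At every node where both `P₁` and `P₂` are `δ`-close to the data,
`|Q| < 2δ`, and fewer than `M/2` nodes are bad for either polynomial, so `Q` is small on more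
than `M/2 > d + 1` of the grid points `jΔ/(M-1)`. Choosing `d + 1` of them, Lagrange
interpolation writes `Q(1)` as a combination of these small values. Nodes with indices
`n₀ < ⋯ < n_d` are at least `|i - j| Δ/(M-1)` apart, so the `i`-th basis polynomial is at most
`((M-1)/Δ)^d / (i! (d-i)!) ≤ (2(M-1)/Δ)^d / d!` at `1`, and `M < 100 d` together with
`d^d/d! ≤ e^d` turns this into `(C/Δ)^d`.
-/

open Real Polynomial Finset Nat

lemma Fin.monotone_cast_sub_of_strictMono {m : ℕ} {f : Fin (m + 1) → ℕ} (hf : StrictMono f) :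
    Monotone fun k : Fin (m + 1) => (f k : ℝ) - k :=
  Fin.monotone_iff_le_succ.2 fun k => by
    have : f k.castSucc + 1 ≤ f k.succ := hf k.castSucc_lt_succ
    have : (f k.castSucc : ℝ) + 1 ≤ f k.succ := by exact_mod_cast this
    simp only [Fin.val_castSucc, Fin.val_succ, Nat.cast_add, Nat.cast_one]
    linarith

lemma Fin.abs_sub_le_abs_sub_of_strictMono {m : ℕ} {f : Fin (m + 1) → ℕ} (hf : StrictMono f)
    (i j : Fin (m + 1)) : |(i : ℝ) - j| ≤ |(f i : ℝ) - f j| := by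
  wlog hij : i ≤ j generalizing i j
  · rw [abs_sub_comm, abs_sub_comm (f i : ℝ)]
    exact this j i (le_of_not_ge hij)
  have hgap := Fin.monotone_cast_sub_of_strictMono hf hij
  have hij' : (i : ℝ) ≤ j := by exact_mod_cast hij
  rw [abs_sub_comm, abs_of_nonneg (sub_nonneg.2 hij'), abs_sub_comm]
  exact (by linarith : (j : ℝ) - i ≤ f j - f i).trans (le_abs_self _)

lemma Fin.prod_erase_abs_sub_eq_factorial_mul_factorial (d : ℕ) (i : Fin (d + 1)) :
    ∏ j ∈ univ.erase i, |(i : ℝ) - j| = (i : ℕ)! * (d - i : ℕ)! := by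
  set g : ℕ → ℝ := fun k => if k = i then 1 else |(i : ℝ) - k|
  have hi : (i : ℕ) + 1 ≤ d + 1 := i.isLt
  have hbelow : ∏ k ∈ range i, g k = (i : ℕ)! := by
    rw [← Nat.descFactorial_self, Nat.descFactorial_eq_prod_range, Nat.cast_prod]
    refine prod_congr rfl fun k hk => ?_
    have hk : k < i := mem_range.1 hk
    simp only [g, if_neg hk.ne, Nat.cast_sub hk.le]
    exact abs_of_nonneg (by simp [hk.le])
  have habove : ∏ k ∈ Ico ((i : ℕ) + 1) (d + 1), g k = (d - i : ℕ)! := by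
    rw [prod_Ico_eq_prod_range, ← prod_range_add_one_eq_factorial, Nat.cast_prod,
      show d + 1 - (i + 1) = d - i by omega]
    refine prod_congr rfl fun k _ => ?_
    simp only [g, if_neg (by omega : (i : ℕ) + 1 + k ≠ i)]
    push_cast
    rw [abs_sub_comm, abs_of_nonneg (by linarith)]
    ring
  calc ∏ j ∈ univ.erase i, |(i : ℝ) - j| = ∏ j : Fin (d + 1), g j := by
        rw [← prod_erase univ (a := i) (by simp [g])]
        exact prod_congr rfl fun j hj => by simp [g, Fin.val_ne_of_ne (ne_of_mem_erase hj)]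
    _ = ∏ k ∈ range (d + 1), g k := Fin.prod_univ_eq_prod_range g (d + 1)
    _ = (i : ℕ)! * (d - i : ℕ)! := by
        rw [← prod_range_mul_prod_Ico g hi, prod_range_succ, hbelow, habove]
        simp [g]

lemma Nat.factorial_le_two_pow_mul_factorial_mul_factorial {d i : ℕ} (hi : i ≤ d) :
    d ! ≤ 2 ^ d * (i ! * (d - i)!) := by
  rw [← Nat.choose_mul_factorial_mul_factorial hi, mul_assoc]
  exact Nat.mul_le_mul_right _ (Nat.choose_le_two_pow d i)

lemma Nat.pow_div_factorial_le_three_pow (d : ℕ) : (d : ℝ) ^ d / d ! ≤ 3 ^ d :=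
  calc (d : ℝ) ^ d / d ! ≤ exp d := pow_div_factorial_le_exp _ d.cast_nonneg d
    _ = exp 1 ^ d := (exp_one_pow d).symm
    _ ≤ 3 ^ d := pow_le_pow_left₀ (exp_pos 1).le exp_one_lt_three.le d

lemma abs_eval_basis_le {d : ℕ} {v : Fin (d + 1) → ℝ} {h x : ℝ} (hh : 0 < h)
    (hsep : ∀ i j : Fin (d + 1), h * |(i : ℝ) - j| ≤ |v i - v j|)
    (hx : ∀ j, |x - v j| ≤ 1)
    (i : Fin (d + 1)) : |(Lagrange.basis univ v i).eval x| ≤ (2 / h) ^ d / d ! := by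
  have hfactor : ∀ j ∈ univ.erase i,
      |(v i - v j)⁻¹ * (x - v j)| ≤ 1 / (h * |(i : ℝ) - j|) := by
    intro j hj
    have hij : (i : ℝ) ≠ j := by exact_mod_cast Fin.val_ne_of_ne (ne_of_mem_erase hj).symm
    have hpos : 0 < h * |(i : ℝ) - j| := mul_pos hh (abs_pos.2 (sub_ne_zero.2 hij))
    rw [abs_mul, abs_inv, inv_mul_eq_div]
    exact div_le_div₀ zero_le_one (hx j) hpos (hsep i j)
  have hcard : (univ.erase i).card = d := by simp
  calc |(Lagrange.basis univ v i).eval x|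
      = ∏ j ∈ univ.erase i, |(v i - v j)⁻¹ * (x - v j)| := by
        simp [Lagrange.basis, eval_prod, Lagrange.basisDivisor, abs_prod]
    _ ≤ ∏ j ∈ univ.erase i, 1 / (h * |(i : ℝ) - j|) :=
        prod_le_prod (fun _ _ => abs_nonneg _) hfactor
    _ = 1 / (h ^ d * ((i : ℕ)! * (d - i : ℕ)!)) := by
        rw [prod_div_distrib, prod_const_one, prod_mul_distrib, prod_const, hcard,
          Fin.prod_erase_abs_sub_eq_factorial_mul_factorial]
    _ ≤ (2 / h) ^ d / d ! := by
        have hfac : (d ! : ℝ) ≤ 2 ^ d * ((i : ℕ)! * (d - i : ℕ)!) := by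
          exact_mod_cast Nat.factorial_le_two_pow_mul_factorial_mul_factorial (Fin.is_le i)
        rw [div_pow, div_div, div_le_div_iff₀ (by positivity) (by positivity), one_mul]
        calc h ^ d * d ! ≤ h ^ d * (2 ^ d * ((i : ℕ)! * (d - i : ℕ)!)) := by gcongr
          _ = 2 ^ d * (h ^ d * ((i : ℕ)! * (d - i : ℕ)!)) := by ring

lemma abs_eval_le_of_separated_nodes {Q : ℝ[X]} {d : ℕ} (hQ : Q.natDegree ≤ d)
    {v : Fin (d + 1) → ℝ} {h x ε : ℝ} (hh : 0 < h)
    (hsep : ∀ i j : Fin (d + 1), h * |(i : ℝ) - j| ≤ |v i - v j|)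
    (hx : ∀ j, |x - v j| ≤ 1)
    (hε : ∀ i, |Q.eval (v i)| ≤ ε) :
    |Q.eval x| ≤ (d + 1) * ε * ((2 / h) ^ d / d !) := by
  have hinj : Set.InjOn v (univ : Finset (Fin (d + 1))) := fun i _ j _ hij => by
    have hle := hsep i j
    rw [hij, sub_self, abs_zero] at hle
    have : |(i : ℝ) - j| = 0 := le_antisymm (nonpos_of_mul_nonpos_right hle hh) (abs_nonneg _)
    exact Fin.ext (by exact_mod_cast sub_eq_zero.1 (abs_eq_zero.1 this))
  have hdeg : Q.degree < (univ : Finset (Fin (d + 1))).card := by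
    rw [Finset.card_univ, Fintype.card_fin]
    exact (degree_le_natDegree).trans_lt (by exact_mod_cast Nat.lt_succ_of_le hQ)
  have hexpand : Q.eval x = ∑ i, Q.eval (v i) * (Lagrange.basis univ v i).eval x := by
    conv_lhs => rw [Lagrange.eq_interpolate hinj hdeg]
    simp [Lagrange.interpolate_apply, eval_finsetSum]
  calc |Q.eval x| ≤ ∑ i, |Q.eval (v i)| * |(Lagrange.basis univ v i).eval x| := by
        rw [hexpand]
        exact (abs_sum_le_sum_abs _ _).trans_eq (by simp only [abs_mul])
    _ ≤ ∑ _i : Fin (d + 1), ε * ((2 / h) ^ d / d !) :=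
        sum_le_sum fun i _ => mul_le_mul (hε i) (abs_eval_basis_le hh hsep hx i) (abs_nonneg _)
          ((abs_nonneg _).trans (hε i))
    _ = (d + 1) * ε * ((2 / h) ^ d / d !) := by
        rw [sum_const, Finset.card_univ, Fintype.card_fin, nsmul_eq_mul]
        push_cast
        ring

lemma abs_eval_le_of_small_on_grid {Q : ℝ[X]} {d M : ℕ} (hQ : Q.natDegree ≤ d)
    {h x ε : ℝ} (hh : 0 < h) (hx : ∀ j : Fin M, |x - j * h| ≤ 1)
    (hcard : d + 1 ≤ #{j : Fin M | |Q.eval (j * h)| < ε}) :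
    |Q.eval x| ≤ (d + 1) * ε * ((2 / h) ^ d / d !) := by
  obtain ⟨T, hT, hTcard⟩ := exists_subset_card_eq hcard
  set n := T.orderEmbOfFin hTcard
  have hmono : StrictMono fun i => (n i : ℕ) := fun _ _ hab => n.strictMono hab
  refine abs_eval_le_of_separated_nodes hQ (v := fun i => (n i : ℕ) * h) hh (fun i j => ?_)
    (fun j => hx (n j)) (fun i => (mem_filter.1 (hT (T.orderEmbOfFin_mem hTcard i))).2.le)
  rw [← sub_mul, abs_mul, abs_of_pos hh, mul_comm]
  exact mul_le_mul_of_nonneg_right (Fin.abs_sub_le_abs_sub_of_strictMono hmono i j) hh.le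

lemma Fin.cast_mul_div_mem_Icc {M : ℕ} {Δ : ℝ} (hΔ : 0 ≤ Δ) (j : Fin M) :
    (j : ℝ) * (Δ / (M - 1)) ∈ Set.Icc 0 Δ := by
  have hj : (j : ℝ) + 1 ≤ M := by exact_mod_cast j.isLt
  rw [mul_div_left_comm]
  exact ⟨mul_nonneg hΔ (div_nonneg j.val.cast_nonneg (by linarith)),
    mul_le_of_le_one_right hΔ (div_le_one_of_le₀ (by linarith) (by linarith))⟩

lemma half_card_lt_card_filter_abs_sub_lt {ι : Type*} [Fintype ι] (f g y : ι → ℝ) {δ : ℝ}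
    (hf : (#{j | δ ≤ |f j - y j|} : ℝ) < Fintype.card ι / 4)
    (hg : (#{j | δ ≤ |g j - y j|} : ℝ) < Fintype.card ι / 4) :
    (Fintype.card ι : ℝ) / 2 < #{j | |f j - g j| < 2 * δ} := by
  classical
  have hfar : #{j | ¬ |f j - g j| < 2 * δ} ≤
      #(({j | δ ≤ |f j - y j|} : Finset ι) ∪ ({j | δ ≤ |g j - y j|} : Finset ι)) := by
    refine card_le_card fun j => ?_
    simp only [mem_filter, mem_union, mem_univ, true_and, not_lt]
    intro hj
    by_contra! hc
    linarith [abs_sub_le (f j) (y j) (g j), abs_sub_comm (y j) (g j)]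
  have hcount : Fintype.card ι ≤
      #{j | |f j - g j| < 2 * δ} + (#{j | δ ≤ |f j - y j|} + #{j | δ ≤ |g j - y j|}) :=
    calc Fintype.card ι = #{j | |f j - g j| < 2 * δ} + #{j | ¬ |f j - g j| < 2 * δ} :=
          (card_filter_add_card_filter_not _).symm
      _ ≤ _ := Nat.add_le_add_left (hfar.trans (card_union_le _ _)) _
  have hcountR := (Nat.cast_le (α := ℝ)).2 hcount
  push_cast at hcountR
  linarith

lemma succ_mul_pow_div_factorial_le {d : ℕ} (hd : 1 ≤ d) {K δ : ℝ} (hK : 0 ≤ K)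
    (hδ : 0 ≤ δ) :
    (d + 1) * (2 * δ) * ((200 * d * K) ^ d / d !) ≤ (2400 * K) ^ d * δ := by
  have hsucc : (d : ℝ) + 1 ≤ 2 ^ d := by exact_mod_cast Nat.lt_two_pow_self
  have htwo : (2 : ℝ) ≤ 2 ^ d := by simpa using pow_le_pow_right₀ one_le_two hd
  calc (d + 1) * (2 * δ) * ((200 * d * K) ^ d / d !)
      = (d + 1) * 2 * (200 * K) ^ d * ((d : ℝ) ^ d / d !) * δ := by
        rw [mul_pow, mul_pow]; ring
    _ ≤ 2 ^ d * 2 ^ d * (200 * K) ^ d * 3 ^ d * δ := by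
        gcongr
        exact Nat.pow_div_factorial_le_three_pow d
    _ = (2400 * K) ^ d * δ := by
        rw [show (2400 : ℝ) * K = 2 * 2 * (200 * K) * 3 by ring]
        simp only [mul_pow]

/-- Robust Berlekamp–Welch bound: there is an absolute constant `C` such that any two degree-`d`
polynomials each matching (to within `δ`) all but fewer than `M/4` of `M` data points with
evenly spaced abscissas on `[0,Δ]` (with `2(d+1) < M < 100d`) satisfy
`|P₁(1) - P₂(1)| ≤ (C Δ⁻¹)^d δ`. -/
theorem robust_berlekamp_welch :
    ∃ C : ℝ, 0 < C ∧
      ∀ (d M : ℕ) (Δ δ : ℝ), 1 ≤ d → 0 < Δ → Δ ≤ 1 → 0 < δ →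
        2 * (d + 1) < M → M < 100 * d →
        ∀ (y : Fin M → ℝ) (P₁ P₂ : Polynomial ℝ),
          P₁.natDegree ≤ d → P₂.natDegree ≤ d →
          ((Finset.univ.filter fun j : Fin M =>
              δ ≤ |P₁.eval ((j : ℝ) * Δ / ((M : ℝ) - 1)) - y j|).card : ℝ) < (M : ℝ) / 4 →
          ((Finset.univ.filter fun j : Fin M =>
              δ ≤ |P₂.eval ((j : ℝ) * Δ / ((M : ℝ) - 1)) - y j|).card : ℝ) < (M : ℝ) / 4 →
          |P₁.eval 1 - P₂.eval 1| ≤ (C * Δ⁻¹) ^ d * δ := by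
  refine ⟨2400, by norm_num, ?_⟩
  intro d M Δ δ hd hΔ hΔ1 hδ hM₁ hM₂ y P₁ P₂ hP₁ hP₂ hB₁ hB₂
  have hM₁' : (2 * (d + 1) : ℝ) < M := by exact_mod_cast hM₁
  have hM₂' : (M : ℝ) < 100 * d := by exact_mod_cast hM₂
  simp only [mul_div_assoc] at hB₁ hB₂
  set h := Δ / ((M : ℝ) - 1)
  have hh : 0 < h := div_pos hΔ (by linarith)
  have hgood : d + 1 ≤ #{j : Fin M | |(P₁ - P₂).eval (j * h)| < 2 * δ} := by
    have hhalf := half_card_lt_card_filter_abs_sub_lt (fun j : Fin M => P₁.eval (j * h))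
      (fun j => P₂.eval (j * h)) y (by simpa using hB₁) (by simpa using hB₂)
    simp only [eval_sub, Fintype.card_fin] at hhalf ⊢
    have hlt : ((d + 1 : ℕ) : ℝ) <
        #{j : Fin M | |P₁.eval (j * h) - P₂.eval (j * h)| < 2 * δ} := by
      push_cast; linarith
    exact_mod_cast hlt.le
  have hx : ∀ j : Fin M, |1 - j * h| ≤ 1 := fun j => by
    obtain ⟨hj₀, hjΔ⟩ := Fin.cast_mul_div_mem_Icc hΔ.le j
    exact abs_le.2 ⟨by linarith, by linarith⟩
  have hspacing : 2 / h ≤ 200 * d * Δ⁻¹ := by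
    rw [div_div_eq_mul_div, div_eq_mul_inv]
    exact mul_le_mul_of_nonneg_right (by linarith) (by positivity)
  calc |P₁.eval 1 - P₂.eval 1| = |(P₁ - P₂).eval 1| := by rw [eval_sub]
    _ ≤ (d + 1) * (2 * δ) * ((2 / h) ^ d / d !) :=
        abs_eval_le_of_small_on_grid ((natDegree_sub_le _ _).trans (max_le hP₁ hP₂)) hh hx hgood
    _ ≤ (d + 1) * (2 * δ) * ((200 * d * Δ⁻¹) ^ d / d !) := by gcongr
    _ ≤ (2400 * Δ⁻¹) ^ d * δ := succ_mul_pow_div_factorial_le hd (by positivity) hδ.le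
end
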